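/- arXiv:2404.11627 — 8 statements merged into one kernel-verified Lean document; each statement's English description precedes it below -/
import Mathlib

section
/- Let U be a bounded connected open subset of ℝ² containing the origin (0,0). Then there exists a connected component Γ′ of the boundary ∂U of U such that every one-sided closed ray emanating from the origin, i.e. every set of the form l = {t·v : t ≥ 0} with v ∈ ℝ² \ {0}, satisfies l ∩ Γ′ ≠ ∅. -/
open Set Metric Complex



/-- On a preconnected set, a continuous function whose exponential is 1 is constant. -/
lemma aux_exp_one_const {α : Type*} [TopologicalSpace α] {s : Set α}
    (hs : IsPreconnected s) {h : α → ℂ} (hc : ContinuousOn h s)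
    (h1 : ∀ x ∈ s, Complex.exp (h x) = 1) :
    ∀ x ∈ s, ∀ y ∈ s, h x = h y := by
  have hrep : ∀ x ∈ s, ∃ n : ℤ, h x = n * (2 * Real.pi * Complex.I) := by
    intro x hx
    exact Complex.exp_eq_one_iff.mp (h1 x hx)
  -- image of imaginary part is preconnected in ℝ
  have him : IsPreconnected ((fun z => (h z).im) '' s) :=
    hs.image _ (Complex.continuous_im.comp_continuousOn hc)
  have hoc : Set.OrdConnected ((fun z => (h z).im) '' s) := him.ordConnected
  have key : ∀ x ∈ s, ∀ y ∈ s, (h x).im = (h y).im := by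
    have main : ∀ x ∈ s, ∀ y ∈ s, (h x).im ≤ (h y).im → (h x).im = (h y).im := by
      intro x hx y hy hle
      obtain ⟨nx, hnx⟩ := hrep x hx
      obtain ⟨ny, hny⟩ := hrep y hy
      have hix : (h x).im = 2 * Real.pi * nx := by rw [hnx]; simp; ring
      have hiy : (h y).im = 2 * Real.pi * ny := by rw [hny]; simp; ring
      by_contra hne
      have hlt : (h x).im < (h y).im := lt_of_le_of_ne hle hne
      have hnlt : (nx : ℝ) < ny := by
        rw [hix, hiy] at hlt
        have h2 : (0:ℝ) < 2 * Real.pi := by positivity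
        exact lt_of_mul_lt_mul_left (by linarith [hlt]) (le_of_lt h2)
      have hnxy : nx < ny := by exact_mod_cast hnlt
      -- intermediate value 2π nx + π is attained
      have hmem : (2 * Real.pi * nx + Real.pi) ∈ (fun z => (h z).im) '' s := by
        apply hoc.out (Set.mem_image_of_mem _ hx) (Set.mem_image_of_mem _ hy)
        constructor
        · rw [hix]; nlinarith [Real.pi_pos]
        · rw [hiy]
          have : (nx : ℝ) + 1 ≤ ny := by exact_mod_cast hnxy
          nlinarith [Real.pi_pos]
      obtain ⟨z, hz, hzval⟩ := hmem
      obtain ⟨m, hm⟩ := hrep z hz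
      have hiz : (h z).im = 2 * Real.pi * m := by rw [hm]; simp; ring
      change (h z).im = _ at hzval
      rw [hiz] at hzval
      have : (2 * (m:ℝ)) = 2 * nx + 1 := by
        have hpi := Real.pi_ne_zero
        apply mul_left_cancel₀ hpi
        nlinarith [hzval]
      have : 2 * m = 2 * nx + 1 := by exact_mod_cast this
      omega
    intro x hx y hy
    rcases le_total ((h x).im) ((h y).im) with hle | hle
    · exact main x hx y hy hle
    · exact (main y hy x hx hle).symm
  intro x hx y hy
  obtain ⟨nx, hnx⟩ := hrep x hx
  obtain ⟨ny, hny⟩ := hrep y hy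
  apply Complex.ext
  · rw [hnx, hny]; simp
  · exact key x hx y hy

/-- One step: if `exp g = a` and `b` is pointwise closer to `a` than `|a|`, then `b`
has a continuous logarithm. -/
lemma aux_log_step {α : Type*} [TopologicalSpace α] {g b : α → ℂ}
    (hg : Continuous g) (hb : Continuous b)
    (hcl : ∀ x, ‖b x - Complex.exp (g x)‖ < ‖Complex.exp (g x)‖) :
    ∃ g' : α → ℂ, Continuous g' ∧ ∀ x, Complex.exp (g' x) = b x := by
  set a : α → ℂ := fun x => Complex.exp (g x) with ha
  have ha0 : ∀ x, a x ≠ 0 := fun x => Complex.exp_ne_zero _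
  have hb0 : ∀ x, b x ≠ 0 := by
    intro x hbx
    have := hcl x
    rw [hbx] at this
    simp at this
  set w : α → ℂ := fun x => b x / a x with hw
  have hw0 : ∀ x, w x ≠ 0 := fun x => div_ne_zero (hb0 x) (ha0 x)
  have hwclose : ∀ x, ‖w x - 1‖ < 1 := by
    intro x
    have : w x - 1 = (b x - a x) / a x := by
      rw [hw]; field_simp [ha0 x]
    rw [this, norm_div]
    rw [div_lt_one (norm_pos_iff.mpr (ha0 x))]
    exact hcl x
  have hwslit : ∀ x, w x ∈ Complex.slitPlane := by
    intro x
    rw [Complex.mem_slitPlane_iff]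
    left
    have h1 : -‖w x - 1‖ ≤ (w x - 1).re := by
      calc -‖w x - 1‖ ≤ -|(w x - 1).re| := by
            exact neg_le_neg (Complex.abs_re_le_norm _)
        _ ≤ (w x - 1).re := neg_abs_le _
    have h2 : (w x).re = 1 + (w x - 1).re := by simp
    have := hwclose x
    linarith
  have hwc : Continuous w := hb.div (Complex.continuous_exp.comp hg) ha0
  refine ⟨fun x => g x + Complex.log (w x), ?_, ?_⟩
  · apply hg.add
    rw [continuous_iff_continuousAt]
    intro x
    exact hwc.continuousAt.clog (hwslit x)
  · intro x
    rw [Complex.exp_add, Complex.exp_log (hw0 x)]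
    rw [hw]
    show a x * (b x / a x) = b x
    rw [mul_div_assoc']; exact mul_div_cancel_left₀ (b x) (ha0 x)


noncomputable def auxRetr (n : ℝ) (x : ℝ × ℝ) : ℝ × ℝ := (n / max n ‖x‖) • x

lemma auxRetr_cont {n : ℝ} (hn : 1 ≤ n) : Continuous (auxRetr n) := by
  have hne : ∀ x : ℝ × ℝ, max n ‖x‖ ≠ 0 := by
    intro x
    have : (1:ℝ) ≤ max n ‖x‖ := le_trans hn (le_max_left _ _)
    linarith
  exact (continuous_const.div (continuous_const.max continuous_norm) hne).smul continuous_id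

lemma auxRetr_norm_le {n : ℝ} (hn : 1 ≤ n) (x : ℝ × ℝ) : ‖auxRetr n x‖ ≤ n := by
  have hpos : (0:ℝ) < max n ‖x‖ := lt_of_lt_of_le (by linarith) (le_max_left _ _)
  have h1 : ‖auxRetr n x‖ = (n / max n ‖x‖) * ‖x‖ := by
    rw [auxRetr, norm_smul, Real.norm_of_nonneg (div_nonneg (by linarith) (le_of_lt hpos))]
  rw [h1, div_mul_eq_mul_div, div_le_iff₀ hpos]
  have := le_max_right n ‖x‖
  nlinarith [norm_nonneg x]

lemma auxRetr_eq_self {n : ℝ} (hn : 1 ≤ n) {x : ℝ × ℝ} (hx : ‖x‖ ≤ n) :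
    auxRetr n x = x := by
  rw [auxRetr, max_eq_left hx, div_self (by linarith), one_smul]

lemma auxRetr_zero (n : ℝ) : auxRetr n 0 = 0 := by simp [auxRetr]

lemma aux_log_ball (f : ℝ × ℝ → ℂ) (hf : Continuous f) (h0 : ∀ x, f x ≠ 0)
    {n : ℝ} (hn : 1 ≤ n) :
    ∃ g : ℝ × ℝ → ℂ, Continuous g ∧ ∀ x, Complex.exp (g x) = f (auxRetr n x) := by
  set s : Set (ℝ × ℝ) := closedBall 0 n with hs
  have hsc : IsCompact s := isCompact_closedBall _ _
  have hsn : s.Nonempty := ⟨0, by simp [hs]; linarith⟩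
  obtain ⟨z, hzs, hzmin⟩ := hsc.exists_isMinOn hsn
    ((continuous_norm.comp hf).continuousOn)
  set δ : ℝ := ‖f z‖ with hδdef
  have hδ : 0 < δ := norm_pos_iff.mpr (h0 z)
  have hUC : UniformContinuousOn f s := hsc.uniformContinuousOn_of_continuous hf.continuousOn
  obtain ⟨ε, hε, hUC'⟩ := (Metric.uniformContinuousOn_iff).mp hUC δ hδ
  obtain ⟨N₀, hN₀⟩ := exists_nat_gt (n / ε)
  set N : ℕ := N₀ + 1 with hN
  have hNpos : 0 < (N:ℝ) := by positivity
  have hnN : n / N < ε := by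
    rw [div_lt_iff₀ hNpos]
    have h1 : n / ε < N := lt_of_lt_of_le hN₀ (by exact_mod_cast Nat.le_succ N₀)
    calc n = (n / ε) * ε := by field_simp
      _ < N * ε := by apply mul_lt_mul_of_pos_right h1 hε
      _ = ε * N := by ring
  -- membership of partial points
  have hmem : ∀ (i : ℕ), i ≤ N → ∀ x, ((i:ℝ)/N) • auxRetr n x ∈ s := by
    intro i hi x
    rw [hs, mem_closedBall_zero_iff, norm_smul, Real.norm_of_nonneg (by positivity)]
    have h1 : (i:ℝ)/N ≤ 1 := by
      rw [div_le_one hNpos]; exact_mod_cast hi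
    have h2 := auxRetr_norm_le hn x
    nlinarith [norm_nonneg (auxRetr n x), div_nonneg (Nat.cast_nonneg i) (le_of_lt hNpos)]
  have key : ∀ i : ℕ, i ≤ N →
      ∃ g : ℝ × ℝ → ℂ, Continuous g ∧
        ∀ x, Complex.exp (g x) = f (((i:ℝ)/N) • auxRetr n x) := by
    intro i
    induction i with
    | zero =>
      intro _
      refine ⟨fun _ => Complex.log (f 0), continuous_const, ?_⟩
      intro x
      simp [Complex.exp_log (h0 0)]
    | succ i ih =>
      intro hi
      obtain ⟨g, hgc, hge⟩ := ih (le_trans (Nat.le_succ i) hi)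
      have hbc : Continuous (fun x => f ((((i:ℕ)+1:ℝ)/N) • auxRetr n x)) :=
        hf.comp (by have := auxRetr_cont hn; fun_prop)
      have hcl : ∀ x, ‖f ((((i:ℕ)+1:ℝ)/N) • auxRetr n x) - Complex.exp (g x)‖
          < ‖Complex.exp (g x)‖ := by
        intro x
        rw [hge x]
        set p := (((i:ℕ)+1:ℝ)/N) • auxRetr n x with hp
        set q := ((i:ℝ)/N) • auxRetr n x with hq
        have hps : p ∈ s := by
          have := hmem (i+1) hi x
          rw [hp]; push_cast; push_cast at this; exact this
        have hqs : q ∈ s := hmem i (le_trans (Nat.le_succ i) hi) x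
        have hdist : dist p q < ε := by
          rw [hp, hq, dist_eq_norm, ← sub_smul]
          have h1 : (((i:ℕ)+1:ℝ)/N) - ((i:ℝ)/N) = 1/N := by field_simp; ring
          rw [h1, norm_smul, Real.norm_of_nonneg (by positivity : (0:ℝ) ≤ 1/(N:ℝ))]
          calc (1/(N:ℝ)) * ‖auxRetr n x‖ ≤ (1/N) * n := by
                apply mul_le_mul_of_nonneg_left (auxRetr_norm_le hn x) (by positivity)
            _ = n / N := by ring
            _ < ε := hnN
        have h2 : dist (f p) (f q) < δ := hUC' p hps q hqs hdist
        have h3 : δ ≤ ‖f q‖ := hzmin hqs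
        rw [Complex.dist_eq] at h2
        exact lt_of_lt_of_le h2 h3
      obtain ⟨g', hg'c, hg'e⟩ := aux_log_step hgc hbc hcl
      refine ⟨g', hg'c, ?_⟩
      intro x
      rw [hg'e x]
      norm_num
  obtain ⟨g, hgc, hge⟩ := key N le_rfl
  refine ⟨g, hgc, ?_⟩
  intro x
  rw [hge x, div_self (ne_of_gt hNpos), one_smul]

theorem aux_exists_log (f : ℝ × ℝ → ℂ) (hf : Continuous f) (h0 : ∀ x, f x ≠ 0) :
    ∃ g : ℝ × ℝ → ℂ, Continuous g ∧ ∀ x, f x = Complex.exp (g x) := by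
  have H : ∀ k : ℕ, ∃ g : ℝ × ℝ → ℂ, Continuous g ∧
      ∀ x, Complex.exp (g x) = f (auxRetr ((k:ℝ)+1) x) := by
    intro k
    apply aux_log_ball f hf h0
    have : (0:ℝ) ≤ (k:ℝ) := Nat.cast_nonneg k
    linarith
  choose G hGc hGe using H
  set G' : ℕ → (ℝ × ℝ) → ℂ := fun k x => G k x - G k 0 + Complex.log (f 0) with hG'
  have hG'c : ∀ k, Continuous (G' k) := fun k => ((hGc k).sub continuous_const).add continuous_const
  have hG'e : ∀ k x, Complex.exp (G' k x) = f (auxRetr ((k:ℝ)+1) x) := by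
    intro k x
    rw [hG']
    simp only []
    rw [Complex.exp_add, Complex.exp_sub, Complex.exp_log (h0 0), hGe k x, hGe k 0,
      auxRetr_zero]
    rw [div_mul_cancel₀ _ (h0 0)]
  have hagree : ∀ k m : ℕ, k ≤ m → ∀ x : ℝ × ℝ, ‖x‖ ≤ (k:ℝ)+1 → G' k x = G' m x := by
    intro k m hkm x hx
    have h1 : ∀ y ∈ closedBall (0:ℝ×ℝ) ((k:ℝ)+1), ∀ y' ∈ closedBall (0:ℝ×ℝ) ((k:ℝ)+1),
        G' k y - G' m y = G' k y' - G' m y' := by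
      apply aux_exp_one_const ((convex_closedBall _ _).isPreconnected)
      · exact (((hG'c k).sub (hG'c m)).continuousOn)
      · intro y hy
        rw [mem_closedBall_zero_iff] at hy
        have hy' : ‖y‖ ≤ (m:ℝ)+1 := by
          have : (k:ℝ) ≤ m := Nat.cast_le.mpr hkm
          linarith
        rw [Complex.exp_sub, hG'e k y, hG'e m y,
          auxRetr_eq_self (le_add_of_nonneg_left (Nat.cast_nonneg k)) hy,
          auxRetr_eq_self (le_add_of_nonneg_left (Nat.cast_nonneg m)) hy',
          div_self (h0 y)]
    have h0mem : (0:ℝ×ℝ) ∈ closedBall (0:ℝ×ℝ) ((k:ℝ)+1) := by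
      simp; positivity
    have hxmem : x ∈ closedBall (0:ℝ×ℝ) ((k:ℝ)+1) := by
      rwa [mem_closedBall_zero_iff]
    have h2 := h1 x hxmem 0 h0mem
    have h3 : G' k 0 = G' m 0 := by
      rw [hG']; simp
    have h4 : G' k x - G' m x = 0 := by rw [h2, h3]; ring
    have := sub_eq_zero.mp h4
    exact this
  set g : (ℝ × ℝ) → ℂ := fun x => G' ⌊‖x‖⌋₊ x with hg
  have hfloor : ∀ x : ℝ × ℝ, ‖x‖ ≤ (⌊‖x‖⌋₊ : ℝ) + 1 :=
    fun x => le_of_lt (Nat.lt_floor_add_one _)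
  have hgexp : ∀ x, f x = Complex.exp (g x) := by
    intro x
    rw [hg]
    simp only []
    rw [hG'e _ x, auxRetr_eq_self (le_add_of_nonneg_left (Nat.cast_nonneg _)) (hfloor x)]
  refine ⟨g, ?_, hgexp⟩
  rw [continuous_iff_continuousAt]
  intro x
  set K : ℕ := ⌊‖x‖⌋₊ + 1 with hK
  have hclaim : ∀ y : ℝ × ℝ, ‖y‖ < (K:ℝ) + 1 → g y = G' K y := by
    intro y hy
    have hky : ⌊‖y‖⌋₊ ≤ K := by
      have : ⌊‖y‖⌋₊ < K + 1 := by
        rw [Nat.floor_lt (norm_nonneg y)]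
        exact_mod_cast hy
      omega
    exact hagree _ K hky y (hfloor y)
  have hxball : x ∈ ball (0:ℝ×ℝ) ((K:ℝ)+1) := by
    rw [mem_ball_zero_iff]
    have h1 : ‖x‖ < (⌊‖x‖⌋₊:ℝ) + 1 := Nat.lt_floor_add_one _
    have h2 : ((⌊‖x‖⌋₊:ℝ)) + 1 ≤ (K:ℝ) + 1 := by
      rw [hK]; push_cast; linarith
    linarith
  apply ((hG'c K).continuousAt).congr
  apply Filter.eventuallyEq_of_mem (isOpen_ball.mem_nhds hxball)
  intro y hy
  rw [mem_ball_zero_iff] at hy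
  exact (hclaim y hy).symm
lemma aux_open_compIn {s : Set (ℝ × ℝ)} (hs : IsOpen s) (x : ℝ × ℝ) :
    IsOpen (connectedComponentIn s x) := by
  rw [Metric.isOpen_iff]
  intro z hz
  obtain ⟨ε, hε, hball⟩ := Metric.isOpen_iff.mp hs z (connectedComponentIn_subset s x hz)
  refine ⟨ε, hε, ?_⟩
  have h1 : ball z ε ⊆ connectedComponentIn s z :=
    (convex_ball z ε).isPreconnected.subset_connectedComponentIn (mem_ball_self hε) hball
  rwa [← connectedComponentIn_eq hz] at h1

/-- Core unicoherence-style lemma: if `W` is open with `W` and `Wᶜ` preconnected,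
then `frontier W` is preconnected. -/
lemma aux_frontier_preconnected {W : Set (ℝ × ℝ)} (hWo : IsOpen W)
    (hWp : IsPreconnected W) (hWcp : IsPreconnected Wᶜ) :
    IsPreconnected (frontier W) := by
  classical
  rw [isPreconnected_closed_iff]
  intro t t' ht ht' hcov hne1 hne2
  by_contra hcon
  rw [Set.not_nonempty_iff_eq_empty] at hcon
  set A : Set (ℝ × ℝ) := frontier W ∩ t with hA
  set B : Set (ℝ × ℝ) := frontier W ∩ t' with hB
  have hAc : IsClosed A := isClosed_frontier.inter ht
  have hBc : IsClosed B := isClosed_frontier.inter ht'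
  have hAne : A.Nonempty := hne1
  have hBne : B.Nonempty := hne2
  have hABdisj : A ∩ B = ∅ := by
    rw [Set.eq_empty_iff_forall_notMem]
    rintro x ⟨⟨hxf, hxt⟩, -, hxt'⟩
    have : x ∈ frontier W ∩ (t ∩ t') := ⟨hxf, hxt, hxt'⟩
    rw [hcon] at this
    exact this
  have hABcov : frontier W = A ∪ B := by
    apply Set.eq_of_subset_of_subset
    · intro x hx
      rcases hcov hx with h | h
      · exact Or.inl ⟨hx, h⟩
      · exact Or.inr ⟨hx, h⟩
    · rintro x (⟨h, -⟩ | ⟨h, -⟩) <;> exact h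
  -- the Urysohn-type function
  have hdenom : ∀ x, 0 < Metric.infDist x A + Metric.infDist x B := by
    intro x
    rcases lt_or_eq_of_le (add_nonneg (Metric.infDist_nonneg : (0:ℝ) ≤ Metric.infDist x A)
      (Metric.infDist_nonneg : (0:ℝ) ≤ Metric.infDist x B)) with h | h
    · exact h
    · exfalso
      have h1 : Metric.infDist x A = 0 :=
        le_antisymm (by nlinarith [(Metric.infDist_nonneg : (0:ℝ) ≤ Metric.infDist x B)])
          Metric.infDist_nonneg
      have h2 : Metric.infDist x B = 0 :=
        le_antisymm (by nlinarith [(Metric.infDist_nonneg : (0:ℝ) ≤ Metric.infDist x A)])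
          Metric.infDist_nonneg
      have hxA : x ∈ A := (hAc.mem_iff_infDist_zero hAne).mpr h1
      have hxB : x ∈ B := (hBc.mem_iff_infDist_zero hBne).mpr h2
      have : x ∈ A ∩ B := ⟨hxA, hxB⟩
      rw [hABdisj] at this
      exact this
  set u : ℝ × ℝ → ℝ := fun x => Metric.infDist x A / (Metric.infDist x A + Metric.infDist x B)
    with hu
  have huc : Continuous u :=
    (Metric.continuous_infDist_pt A).div
      ((Metric.continuous_infDist_pt A).add (Metric.continuous_infDist_pt B))
      (fun x => ne_of_gt (hdenom x))
  have hu0 : ∀ x ∈ A, u x = 0 := by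
    intro x hx
    rw [hu]
    simp only []
    rw [Metric.infDist_zero_of_mem hx, zero_div]
  have hu1 : ∀ x ∈ B, u x = 1 := by
    intro x hx
    have h1 : Metric.infDist x B = 0 := Metric.infDist_zero_of_mem hx
    have h2 := hdenom x
    rw [h1, add_zero] at h2
    rw [hu]
    simp only []
    rw [h1, add_zero, div_self (ne_of_gt h2)]
  set v : ℝ × ℝ → ℂ := fun x => ((Real.pi * u x : ℝ) : ℂ) * Complex.I with hv
  have hvc : Continuous v :=
    (Complex.continuous_ofReal.comp (continuous_const.mul huc)).mul continuous_const
  have hvA : ∀ x ∈ A, v x = 0 := by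
    intro x hx
    rw [hv]; simp only []
    rw [hu0 x hx]
    push_cast
    ring
  have hvB : ∀ x ∈ B, v x = (Real.pi : ℂ) * Complex.I := by
    intro x hx
    rw [hv]; simp only []
    rw [hu1 x hx]
    push_cast
    ring
  -- the glued circle-valued map
  set f : ℝ × ℝ → ℂ :=
    (closure W).piecewise (fun x => Complex.exp (v x)) (fun x => Complex.exp (-v x)) with hf
  have hfrsub : frontier (closure W) ⊆ frontier W := frontier_closure_subset
  have hagree : ∀ x ∈ frontier W,
      Complex.exp (v x) = Complex.exp (-v x) := by
    intro x hx
    rw [hABcov] at hx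
    rcases hx with hx | hx
    · rw [hvA x hx]; simp
    · rw [hvB x hx, Complex.exp_neg, Complex.exp_pi_mul_I]
      norm_num
  have hfc : Continuous f := by
    apply Continuous.piecewise
    · intro a ha
      exact hagree a (hfrsub ha)
    · exact Complex.continuous_exp.comp hvc
    · exact Complex.continuous_exp.comp hvc.neg
  have hf0 : ∀ x, f x ≠ 0 := by
    intro x
    rw [hf]
    by_cases hx : x ∈ closure W
    · rw [Set.piecewise_eq_of_mem _ _ _ hx]; exact Complex.exp_ne_zero _
    · rw [Set.piecewise_eq_of_notMem _ _ _ hx]; exact Complex.exp_ne_zero _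
  obtain ⟨g, hgc, hfg⟩ := aux_exists_log f hfc hf0
  obtain ⟨a, haA⟩ := hAne
  obtain ⟨b, hbB⟩ := hBne
  have haf : a ∈ frontier W := by rw [hABcov]; exact Or.inl haA
  have hbf : b ∈ frontier W := by rw [hABcov]; exact Or.inr hbB
  have hacl : a ∈ closure W := frontier_subset_closure haf
  have hbcl : b ∈ closure W := frontier_subset_closure hbf
  have hanW : a ∈ Wᶜ := fun h => ((hWo.frontier_eq ▸ haf).2) h
  have hbnW : b ∈ Wᶜ := fun h => ((hWo.frontier_eq ▸ hbf).2) h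
  -- on closure W : exp (g - v) = 1
  have E1 : ∀ x ∈ closure W, Complex.exp (g x - v x) = 1 := by
    intro x hx
    rw [Complex.exp_sub, ← hfg x, hf, Set.piecewise_eq_of_mem _ _ _ hx,
      div_self (Complex.exp_ne_zero _)]
  have H1 := aux_exp_one_const hWp.closure
    ((hgc.sub hvc).continuousOn) E1 a hacl b hbcl
  -- on Wᶜ : exp (g + v) = 1
  have hfWc : ∀ x ∈ Wᶜ, f x = Complex.exp (-v x) := by
    intro x hx
    by_cases hcx : x ∈ closure W
    · have hxf : x ∈ frontier W := by
        rw [hWo.frontier_eq]; exact ⟨hcx, hx⟩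
      rw [hf, Set.piecewise_eq_of_mem _ _ _ hcx]
      exact hagree x hxf
    · rw [hf, Set.piecewise_eq_of_notMem _ _ _ hcx]
  have E2 : ∀ x ∈ Wᶜ, Complex.exp (g x + v x) = 1 := by
    intro x hx
    rw [Complex.exp_add, ← hfg x, hfWc x hx, ← Complex.exp_add, neg_add_cancel,
      Complex.exp_zero]
  have H2 := aux_exp_one_const hWcp
    ((hgc.add hvc).continuousOn) E2 a hanW b hbnW
  -- derive the contradiction
  simp only [Pi.sub_apply, Pi.add_apply] at H1 H2
  rw [hvA a haA, hvB b hbB] at H1 H2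
  have hpi : (Real.pi : ℂ) * Complex.I = 0 := by linear_combination (H1 - H2) / 2
  have : (Real.pi : ℂ) = 0 ∨ Complex.I = 0 := mul_eq_zero.mp hpi
  rcases this with h | h
  · exact Real.pi_ne_zero (by exact_mod_cast h)
  · exact Complex.I_ne_zero h
lemma aux_seg_scale {R : ℝ} {p : ℝ × ℝ} {c : ℝ} (hp : R < ‖p‖) (hc : 1 ≤ c) :
    segment ℝ p (c • p) ⊆ {x : ℝ × ℝ | R < ‖x‖} := by
  intro z hz
  rw [segment_eq_image] at hz
  obtain ⟨θ, hθ, rfl⟩ := hz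
  have h1 : (1 - θ) • p + θ • c • p = ((1 - θ) + θ * c) • p := by
    rw [smul_smul, ← add_smul]
  show R < ‖(1 - θ) • p + θ • c • p‖
  rw [h1, norm_smul, Real.norm_of_nonneg (by nlinarith [hθ.1, hθ.2])]
  nlinarith [mul_nonneg (mul_nonneg hθ.1 (sub_nonneg.mpr hc)) (norm_nonneg p)]

lemma aux_seg_fst {R a b b' : ℝ} (ha : R < |a|) :
    segment ℝ ((a, b) : ℝ × ℝ) ((a, b') : ℝ × ℝ) ⊆ {x : ℝ × ℝ | R < ‖x‖} := by
  intro z hz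
  rw [segment_eq_image] at hz
  obtain ⟨θ, hθ, rfl⟩ := hz
  have h1 : ((1 - θ) • ((a, b) : ℝ × ℝ) + θ • ((a, b') : ℝ × ℝ)).1 = a := by
    simp [Prod.smul_def]
    ring
  have h2 := norm_fst_le ((1 - θ) • ((a, b) : ℝ × ℝ) + θ • ((a, b') : ℝ × ℝ))
  rw [h1, Real.norm_eq_abs] at h2
  exact lt_of_lt_of_le ha h2

lemma aux_seg_snd {R a a' b : ℝ} (hb : R < |b|) :
    segment ℝ ((a, b) : ℝ × ℝ) ((a', b) : ℝ × ℝ) ⊆ {x : ℝ × ℝ | R < ‖x‖} := by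
  intro z hz
  rw [segment_eq_image] at hz
  obtain ⟨θ, hθ, rfl⟩ := hz
  have h1 : ((1 - θ) • ((a, b) : ℝ × ℝ) + θ • ((a', b) : ℝ × ℝ)).2 = b := by
    simp [Prod.smul_def]
    ring
  have h2 := norm_snd_le ((1 - θ) • ((a, b) : ℝ × ℝ) + θ • ((a', b) : ℝ × ℝ))
  rw [h1, Real.norm_eq_abs] at h2
  exact lt_of_lt_of_le hb h2

/-- Any point outside the ball of radius `R` can be connected to `(R+1, R+1)`
inside the exterior region. -/
lemma aux_ray_connect {R : ℝ} (hR : 0 < R) {y : ℝ × ℝ} (hy : R < ‖y‖) :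
    ∃ s : Set (ℝ × ℝ), IsPreconnected s ∧ s ⊆ {x : ℝ × ℝ | R < ‖x‖} ∧
      y ∈ s ∧ ((R + 1, R + 1) : ℝ × ℝ) ∈ s := by
  set E : Set (ℝ × ℝ) := {x : ℝ × ℝ | R < ‖x‖} with hE
  set M : ℝ := max ‖y‖ (R + 1) with hM
  have hM1 : R + 1 ≤ M := le_max_right _ _
  have hMy : ‖y‖ ≤ M := le_max_left _ _
  have hMpos : 0 < M := by linarith
  have hny : 0 < ‖y‖ := lt_trans hR hy
  set c₀ : ℝ := M / ‖y‖ with hc₀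
  have hc₀1 : 1 ≤ c₀ := (le_div_iff₀ hny).mpr (by linarith)
  set y₁ : ℝ × ℝ := c₀ • y with hy₁
  have hy₁norm : ‖y₁‖ = M := by
    rw [hy₁, norm_smul, Real.norm_of_nonneg (by positivity), hc₀,
      div_mul_cancel₀ _ (ne_of_gt hny)]
  set m : ℝ × ℝ := ((M, M) : ℝ × ℝ) with hm
  set w₀ : ℝ × ℝ := ((R + 1, R + 1) : ℝ × ℝ) with hw₀
  have hw₀norm : ‖w₀‖ = R + 1 := by
    rw [hw₀, Prod.norm_def]
    simp [Real.norm_eq_abs, abs_of_pos (by linarith : (0:ℝ) < R + 1)]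
  have hw₀E : R < ‖w₀‖ := by rw [hw₀norm]; linarith
  have hmw : m = (M / (R + 1)) • w₀ := by
    rw [hm, hw₀, Prod.smul_def]
    have : M / (R + 1) * (R + 1) = M := div_mul_cancel₀ _ (by linarith)
    simp [this]
  have hseg4 : segment ℝ w₀ m ⊆ E := by
    rw [hmw]
    exact aux_seg_scale hw₀E ((le_div_iff₀ (by linarith)).mpr (by linarith))
  have hseg1 : segment ℝ y y₁ ⊆ E := aux_seg_scale hy hc₀1
  -- case analysis on which coordinate attains the max
  have hmax : max ‖y₁.1‖ ‖y₁.2‖ = M := by rw [← Prod.norm_def, hy₁norm]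
  have hMabs : R < |M| := by rw [abs_of_pos hMpos]; linarith
  rcases max_cases ‖y₁.1‖ ‖y₁.2‖ with ⟨h1, -⟩ | ⟨h1, -⟩
  · -- first coordinate attains the max : ‖y₁.1‖ = M
    have hfst : |y₁.1| = M := by rw [← Real.norm_eq_abs, ← h1, hmax]
    set z : ℝ × ℝ := ((y₁.1, M) : ℝ × ℝ) with hz
    have hseg2 : segment ℝ y₁ z ⊆ E := by
      have := aux_seg_fst (R := R) (a := y₁.1) (b := y₁.2) (b' := M)
        (by rw [hfst]; linarith)
      rwa [Prod.mk.eta] at this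
    have hseg3 : segment ℝ z m ⊆ E := aux_seg_snd (R := R) (a := y₁.1) (a' := M) (b := M) hMabs
    refine ⟨segment ℝ y y₁ ∪ segment ℝ y₁ z ∪ segment ℝ z m ∪ segment ℝ w₀ m,
      ?_, ?_, ?_, ?_⟩
    · apply IsPreconnected.union m
      · exact Or.inr (right_mem_segment ℝ z m)
      · exact right_mem_segment ℝ w₀ m
      · apply IsPreconnected.union z
        · exact Or.inr (right_mem_segment ℝ y₁ z)
        · exact left_mem_segment ℝ z m
        · apply IsPreconnected.union y₁
          · exact right_mem_segment ℝ y y₁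
          · exact left_mem_segment ℝ y₁ z
          · exact (convex_segment _ _).isPreconnected
          · exact (convex_segment _ _).isPreconnected
        · exact (convex_segment _ _).isPreconnected
      · exact (convex_segment _ _).isPreconnected
    · rintro x (((hx | hx) | hx) | hx)
      exacts [hseg1 hx, hseg2 hx, hseg3 hx, hseg4 hx]
    · exact Or.inl (Or.inl (Or.inl (left_mem_segment ℝ y y₁)))
    · exact Or.inr (left_mem_segment ℝ w₀ m)
  · -- second coordinate attains the max : ‖y₁.2‖ = M
    have hsnd : |y₁.2| = M := by rw [← Real.norm_eq_abs, ← h1, hmax]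
    set z : ℝ × ℝ := ((M, y₁.2) : ℝ × ℝ) with hz
    have hseg2 : segment ℝ y₁ z ⊆ E := by
      have := aux_seg_snd (R := R) (a := y₁.1) (a' := M) (b := y₁.2)
        (by rw [hsnd]; linarith)
      rwa [Prod.mk.eta] at this
    have hseg3 : segment ℝ z m ⊆ E := aux_seg_fst (R := R) (a := M) (b := y₁.2) (b' := M) hMabs
    refine ⟨segment ℝ y y₁ ∪ segment ℝ y₁ z ∪ segment ℝ z m ∪ segment ℝ w₀ m,
      ?_, ?_, ?_, ?_⟩
    · apply IsPreconnected.union m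
      · exact Or.inr (right_mem_segment ℝ z m)
      · exact right_mem_segment ℝ w₀ m
      · apply IsPreconnected.union z
        · exact Or.inr (right_mem_segment ℝ y₁ z)
        · exact left_mem_segment ℝ z m
        · apply IsPreconnected.union y₁
          · exact right_mem_segment ℝ y y₁
          · exact left_mem_segment ℝ y₁ z
          · exact (convex_segment _ _).isPreconnected
          · exact (convex_segment _ _).isPreconnected
        · exact (convex_segment _ _).isPreconnected
      · exact (convex_segment _ _).isPreconnected
    · rintro x (((hx | hx) | hx) | hx)
      exacts [hseg1 hx, hseg2 hx, hseg3 hx, hseg4 hx]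
    · exact Or.inl (Or.inl (Or.inl (left_mem_segment ℝ y y₁)))
    · exact Or.inr (left_mem_segment ℝ w₀ m)
/-- Lemma 2.4: if `U` is a bounded connected open subset of `ℝ²` containing the
origin, then some connected component `Γ′` of the boundary of `U` meets every
closed one-sided ray emanating from the origin. -/
theorem stmt_4 (U : Set (ℝ × ℝ)) (hUo : IsOpen U) (hUc : IsConnected U)
    (hUb : Bornology.IsBounded U) (h0 : (0 : ℝ × ℝ) ∈ U) :
    ∃ y ∈ frontier U,
      ∀ v : ℝ × ℝ, v ≠ 0 → ∃ t : ℝ, 0 ≤ t ∧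
        t • v ∈ connectedComponentIn (frontier U) y := by
  classical
  -- radius bound
  obtain ⟨r, hr⟩ := hUb.subset_closedBall 0
  set R : ℝ := max r 0 + 1 with hR
  have hRpos : 0 < R := by
    have : (0:ℝ) ≤ max r 0 := le_max_right _ _
    linarith
  set C : Set (ℝ × ℝ) := closure U with hC
  have hCR : C ⊆ ball (0 : ℝ × ℝ) R := by
    rw [hC]
    refine subset_trans (closure_minimal hr isClosed_closedBall) ?_
    apply closedBall_subset_ball
    have : r ≤ max r 0 := le_max_left _ _
    linarith
  set E : Set (ℝ × ℝ) := {x : ℝ × ℝ | R < ‖x‖} with hE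
  have hEC : E ⊆ Cᶜ := by
    intro x hx hxC
    have := hCR hxC
    rw [mem_ball_zero_iff] at this
    exact absurd this (not_lt_of_gt hx)
  set w₀ : ℝ × ℝ := ((R + 1, R + 1) : ℝ × ℝ) with hw₀
  have hw₀norm : ‖w₀‖ = R + 1 := by
    rw [hw₀, Prod.norm_def]
    simp [Real.norm_eq_abs, abs_of_pos (by linarith : (0:ℝ) < R + 1)]
  have hw₀E : w₀ ∈ E := by rw [hE, Set.mem_setOf_eq, hw₀norm]; linarith
  set W : Set (ℝ × ℝ) := connectedComponentIn Cᶜ w₀ with hW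
  have hCc_open : IsOpen Cᶜ := isClosed_closure.isOpen_compl
  have hWo : IsOpen W := aux_open_compIn hCc_open w₀
  have hWp : IsPreconnected W := isPreconnected_connectedComponentIn
  have hWsub : W ⊆ Cᶜ := connectedComponentIn_subset _ _
  -- all far points are in W
  have hEW : E ⊆ W := by
    intro x hx
    obtain ⟨s, hsp, hsE, hxs, hw₀s⟩ := aux_ray_connect hRpos (hx : R < ‖x‖)
    have : s ⊆ W := hsp.subset_connectedComponentIn hw₀s (subset_trans hsE hEC)
    exact this hxs
  -- U and W are disjoint; even closure W and U
  have hUW : ∀ x ∈ U, x ∉ W := fun x hx hxW => hWsub hxW (subset_closure hx)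
  have hclWU : ∀ x ∈ closure W, x ∉ U := by
    intro x hx hxU
    have h1 : x ∈ U ∩ closure W := ⟨hxU, hx⟩
    have h2 := hUo.inter_closure h1
    have h3 : U ∩ W = ∅ := by
      rw [Set.eq_empty_iff_forall_notMem]
      rintro z ⟨hz1, hz2⟩
      exact hUW z hz1 hz2
    rw [h3, closure_empty] at h2
    exact h2
  -- if a point outside C is in the closure of a component of Cᶜ, it is in it
  have hcomp_closed : ∀ (K : Set (ℝ × ℝ)), (∃ p, K = connectedComponentIn Cᶜ p ∧ p ∈ Cᶜ) →
      ∀ x ∈ Cᶜ, x ∈ closure K → x ∈ K := by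
    rintro K ⟨p, rfl, hp⟩ x hxC hxcl
    set Kx := connectedComponentIn Cᶜ x with hKx
    have hKxo : IsOpen Kx := aux_open_compIn hCc_open x
    have hxKx : x ∈ Kx := mem_connectedComponentIn hxC
    obtain ⟨z, hz1, hz2⟩ :=
      (_root_.mem_closure_iff.mp hxcl) Kx hKxo hxKx
    have e1 : Kx = connectedComponentIn Cᶜ z := connectedComponentIn_eq hz1
    have e2 : connectedComponentIn Cᶜ p = connectedComponentIn Cᶜ z :=
      connectedComponentIn_eq hz2
    rw [e2, ← e1]
    exact hxKx
  -- frontier W ⊆ frontier U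
  have hfrWU : frontier W ⊆ frontier U := by
    intro x hx
    rw [hWo.frontier_eq] at hx
    obtain ⟨hxcl, hxW⟩ := hx
    have hxU : x ∉ U := hclWU x hxcl
    have hxC : x ∈ C := by
      by_contra hxC
      exact hxW (hcomp_closed W ⟨w₀, rfl, hEC hw₀E⟩ x hxC hxcl)
    rw [frontier, hUo.interior_eq]
    exact ⟨hxC, hxU⟩
  -- Wᶜ is preconnected
  have hCp : IsPreconnected C := hUc.isPreconnected.closure
  have hCW : C ⊆ Wᶜ := fun z hz hzW => hWsub hzW hz
  have h0C : (0 : ℝ × ℝ) ∈ C := subset_closure h0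
  have hWcp : IsPreconnected Wᶜ := by
    apply isPreconnected_of_forall (0 : ℝ × ℝ)
    intro y hy
    by_cases hyC : y ∈ C
    · exact ⟨C, hCW, h0C, hyC, hCp⟩
    · set K := connectedComponentIn Cᶜ y with hK
      have hyK : y ∈ K := mem_connectedComponentIn hyC
      have hKW : K ⊆ Wᶜ := by
        intro z hz hzW
        have e1 : K = connectedComponentIn Cᶜ z := connectedComponentIn_eq hz
        have e2 : W = connectedComponentIn Cᶜ z := connectedComponentIn_eq hzW
        have : y ∈ W := by rw [e2, ← e1]; exact hyK
        exact hy this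
      have hKo : IsOpen K := aux_open_compIn hCc_open y
      have hKne : K.Nonempty := ⟨y, hyK⟩
      have hKne_univ : K ≠ Set.univ := by
        intro h
        have : (0:ℝ×ℝ) ∈ K := h ▸ Set.mem_univ _
        exact (connectedComponentIn_subset _ _ this) h0C
      have hfrK : (frontier K).Nonempty := by
        by_contra h
        rw [Set.not_nonempty_iff_eq_empty] at h
        have hclopen : IsClopen K := isClopen_iff_frontier_eq_empty.mpr h
        rcases isClopen_iff.mp hclopen with h1 | h1
        · exact absurd h1 (Set.nonempty_iff_ne_empty.mp hKne)
        · exact hKne_univ h1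
      obtain ⟨p, hp⟩ := hfrK
      rw [hKo.frontier_eq] at hp
      obtain ⟨hpcl, hpK⟩ := hp
      have hpC : p ∈ C := by
        by_contra hpC
        exact hpK (hcomp_closed K ⟨y, rfl, hyC⟩ p hpC hpcl)
      have hpW : p ∈ Wᶜ := hCW hpC
      refine ⟨(K ∪ {p}) ∪ C, ?_, ?_, ?_, ?_⟩
      · rintro z ((hz | hz) | hz)
        · exact hKW hz
        · rw [Set.mem_singleton_iff] at hz; rw [hz]; exact hpW
        · exact hCW hz
      · exact Or.inr h0C
      · exact Or.inl (Or.inl hyK)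
      · apply IsPreconnected.union p
        · exact Or.inr rfl
        · exact hpC
        · apply IsPreconnected.subset_closure isPreconnected_connectedComponentIn
            Set.subset_union_left
          rintro z (hz | hz)
          · exact subset_closure hz
          · rw [Set.mem_singleton_iff] at hz; rw [hz]; exact hpcl
        · exact hCp
  -- every ray from the origin hits frontier W
  have rayhit : ∀ v : ℝ × ℝ, v ≠ 0 → ∃ t : ℝ, 0 ≤ t ∧ t • v ∈ frontier W := by
    intro v hv
    have hvn : 0 < ‖v‖ := norm_pos_iff.mpr hv
    set T : Set ℝ := {t : ℝ | 0 ≤ t ∧ t • v ∈ W} with hT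
    have hTne : T.Nonempty := by
      refine ⟨(R + 1) / ‖v‖, by positivity, ?_⟩
      apply hEW
      rw [hE, Set.mem_setOf_eq, norm_smul, Real.norm_of_nonneg (by positivity),
        div_mul_cancel₀ _ (ne_of_gt hvn)]
      linarith
    have hTbdd : BddBelow T := ⟨0, fun t ht => ht.1⟩
    set t₀ : ℝ := sInf T with ht₀
    have ht₀0 : 0 ≤ t₀ := le_csInf hTne (fun t ht => ht.1)
    have hclosure : t₀ • v ∈ closure W := by
      have h1 : t₀ ∈ closure T := csInf_mem_closure hTne hTbdd
      have hcont : Continuous (fun t : ℝ => t • v) := continuous_id.smul continuous_const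
      exact map_mem_closure (f := fun t : ℝ => t • v) (s := T) (t := W)
        hcont h1 (fun t (ht : t ∈ T) => ht.2)
    obtain ⟨δ, hδ, hball⟩ := Metric.isOpen_iff.mp hUo 0 h0
    have hlower : ∀ t ∈ T, δ / ‖v‖ ≤ t := by
      intro t ht
      by_contra hlt
      push_neg at hlt
      have h1 : ‖t • v‖ < δ := by
        rw [norm_smul, Real.norm_of_nonneg ht.1]
        calc t * ‖v‖ < (δ / ‖v‖) * ‖v‖ := by
              apply mul_lt_mul_of_pos_right hlt hvn
          _ = δ := div_mul_cancel₀ _ (ne_of_gt hvn)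
      have h2 : t • v ∈ U := hball (by rwa [mem_ball_zero_iff])
      exact hUW _ h2 ht.2
    have ht₀pos : 0 < t₀ := lt_of_lt_of_le (by positivity) (le_csInf hTne hlower)
    have hnotW : t₀ • v ∉ W := by
      intro hmem
      obtain ⟨ε, hε, hball'⟩ := Metric.isOpen_iff.mp hWo _ hmem
      set σ : ℝ := min t₀ (ε / ‖v‖) with hσ
      have hσpos : 0 < σ := lt_min ht₀pos (by positivity)
      set t₁ : ℝ := t₀ - σ / 2 with ht₁
      have ht₁0 : 0 ≤ t₁ := by
        have : σ ≤ t₀ := min_le_left _ _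
        rw [ht₁]; linarith
      have ht₁lt : t₁ < t₀ := by rw [ht₁]; linarith
      have hdist : dist (t₁ • v) (t₀ • v) < ε := by
        rw [dist_eq_norm, ← sub_smul, norm_smul, Real.norm_eq_abs]
        have h1 : |t₁ - t₀| = σ / 2 := by
          rw [ht₁, abs_of_nonpos (by linarith)]; ring
        rw [h1]
        have h2 : σ ≤ ε / ‖v‖ := min_le_right _ _
        calc σ / 2 * ‖v‖ ≤ (ε / ‖v‖) / 2 * ‖v‖ := by
              apply mul_le_mul_of_nonneg_right (by linarith) (le_of_lt hvn)
          _ = ε / 2 := by field_simp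
          _ < ε := by linarith
      have ht₁W : t₁ • v ∈ W := hball' (by rwa [mem_ball])
      have : t₀ ≤ t₁ := csInf_le hTbdd ⟨ht₁0, ht₁W⟩
      linarith
    refine ⟨t₀, ht₀0, ?_⟩
    rw [hWo.frontier_eq]
    exact ⟨hclosure, hnotW⟩
  -- conclusion
  have hpre : IsPreconnected (frontier W) := aux_frontier_preconnected hWo hWp hWcp
  obtain ⟨ty, hty0, hty⟩ := rayhit ((1, 0) : ℝ × ℝ)
    (by norm_num [Prod.ext_iff])
  refine ⟨ty • ((1, 0) : ℝ × ℝ), hfrWU hty, ?_⟩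
  intro v hv
  obtain ⟨t, ht0, htW⟩ := rayhit v hv
  have hsub : frontier W ⊆ connectedComponentIn (frontier U) (ty • ((1, 0) : ℝ × ℝ)) :=
    hpre.subset_connectedComponentIn hty hfrWU
  exact ⟨t, ht0, hsub htW⟩
end

section
/- Let H be a real Hilbert space, let I : H → ℝ be Fréchet differentiable with continuous gradient ∇I : H → H, let 0 < T < ∞, and let u : [0,T) → H be differentiable with u′(t) = −∇I(u(t)) for all t ∈ [0,T). Assume c̃ := inf_{t ∈ [0,T)} I(u(t)) > −∞. Then the limit ū₀ := lim_{t → T⁻} u(t) exists in H, and I(ū₀) ≤ I(u(0)). -/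
open MeasureTheory intervalIntegral Filter Set


/-- Lemma 2.2(1), finite-time case: a steepest-descent trajectory
`u′ = −∇I(u)` on `[0,T)`, `0 < T < ∞`, with energy bounded below has a limit
`ū₀ = lim_{t → T⁻} u(t)` in `H`, and `I(ū₀) ≤ I(u(0))`. -/
theorem stmt_8 {H : Type*} [NormedAddCommGroup H] [InnerProductSpace ℝ H]
    [CompleteSpace H]
    (I : H → ℝ) (I' : H → H) (hgrad : ∀ v : H, HasGradientAt I (I' v) v)
    (hI'cont : Continuous I')
    (T : ℝ) (hT : 0 < T) (u : ℝ → H)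
    (hu : ∀ t : ℝ, 0 ≤ t → t < T → HasDerivAt u (-I' (u t)) t)
    (hbdd : BddBelow {y : ℝ | ∃ t : ℝ, 0 ≤ t ∧ t < T ∧ y = I (u t)}) :
    ∃ w : H, Filter.Tendsto u (nhdsWithin T (Set.Iio T)) (nhds w) ∧
      I w ≤ I (u 0) := by
  have hucont : ∀ t : ℝ, 0 ≤ t → t < T → ContinuousAt u t :=
    fun t h1 h2 => (hu t h1 h2).continuousAt
  -- derivative of the energy along the flow
  have hφderiv : ∀ t : ℝ, 0 ≤ t → t < T →
      HasDerivAt (fun s => I (u s)) (-‖I' (u t)‖ ^ 2) t := by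
    intro t h1 h2
    have h := (hgrad (u t)).hasFDerivAt.comp_hasDerivAt t (hu t h1 h2)
    convert h using 1
    · rfl
    · rfl
    · rfl
    simp [InnerProductSpace.toDual_apply_apply, inner_neg_right,
      real_inner_self_eq_norm_sq]
  -- continuity helpers
  have hvcont : ∀ a b : ℝ, 0 ≤ a → a ≤ b → b < T →
      ContinuousOn (fun t => I' (u t)) (uIcc a b) := by
    intro a b ha hab hb
    rw [uIcc_of_le hab]
    intro t ht
    exact (hI'cont.continuousAt.comp
      (hucont t (ha.trans ht.1) (lt_of_le_of_lt ht.2 hb))).continuousWithinAt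
  -- FTC for the energy
  have hkey1 : ∀ a b : ℝ, 0 ≤ a → a ≤ b → b < T →
      (∫ t in a..b, ‖I' (u t)‖ ^ 2) = I (u a) - I (u b) := by
    intro a b ha hab hb
    have hint : IntervalIntegrable (fun t => -‖I' (u t)‖ ^ 2) volume a b :=
      (((continuous_norm.comp_continuousOn (hvcont a b ha hab hb)).pow 2).neg).intervalIntegrable
    have h := integral_eq_sub_of_hasDerivAt
      (f := fun s => I (u s)) (f' := fun t => -‖I' (u t)‖ ^ 2)
      (fun t ht => by
        rw [uIcc_of_le hab] at ht
        exact hφderiv t (ha.trans ht.1) (lt_of_le_of_lt ht.2 hb)) hint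
    rw [intervalIntegral.integral_neg] at h
    linarith
  have hmono : ∀ a b : ℝ, 0 ≤ a → a ≤ b → b < T → I (u b) ≤ I (u a) := by
    intro a b ha hab hb
    have h := hkey1 a b ha hab hb
    have h0 : (0:ℝ) ≤ ∫ t in a..b, ‖I' (u t)‖ ^ 2 :=
      intervalIntegral.integral_nonneg hab (fun t _ => sq_nonneg _)
    linarith
  -- the main estimate
  have hest : ∀ ε : ℝ, 0 < ε → ∀ a b : ℝ, 0 ≤ a → a ≤ b → b < T →
      ‖u b - u a‖ ≤ ε / 2 * (b - a) + (I (u a) - I (u b)) / (2 * ε) := by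
    intro ε hε a b ha hab hb
    have hvc := hvcont a b ha hab hb
    have hnc : ContinuousOn (fun t => ‖I' (u t)‖) (uIcc a b) :=
      continuous_norm.comp_continuousOn hvc
    have hgc : ContinuousOn (fun t => ‖I' (u t)‖ ^ 2) (uIcc a b) := hnc.pow 2
    have hftc := integral_eq_sub_of_hasDerivAt
      (f := u) (f' := fun t => -I' (u t))
      (fun t ht => by
        rw [uIcc_of_le hab] at ht
        exact hu t (ha.trans ht.1) (lt_of_le_of_lt ht.2 hb)) hvc.neg.intervalIntegrable
    calc ‖u b - u a‖ = ‖∫ t in a..b, -I' (u t)‖ := by rw [hftc]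
      _ ≤ ∫ t in a..b, ‖-I' (u t)‖ := intervalIntegral.norm_integral_le_integral_norm hab
      _ = ∫ t in a..b, ‖I' (u t)‖ := by simp
      _ ≤ ∫ t in a..b, (ε / 2 + ‖I' (u t)‖ ^ 2 / (2 * ε)) := by
          refine intervalIntegral.integral_mono_on hab hnc.intervalIntegrable
            ((continuousOn_const.add (hgc.div_const _)).intervalIntegrable) ?_
          intro t _
          have h1 : 0 ≤ (‖I' (u t)‖ - ε) ^ 2 := sq_nonneg _
          rw [← sub_le_iff_le_add', le_div_iff₀ (by positivity)]
          nlinarith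
      _ = ε / 2 * (b - a) + (I (u a) - I (u b)) / (2 * ε) := by
          rw [intervalIntegral.integral_add intervalIntegrable_const
            ((hgc.div_const _).intervalIntegrable), intervalIntegral.integral_const,
            intervalIntegral.integral_div, hkey1 a b ha hab hb]
          ring_nf
  -- infimum of the energy
  set S : Set ℝ := {y : ℝ | ∃ t : ℝ, 0 ≤ t ∧ t < T ∧ y = I (u t)} with hS
  have hSne : S.Nonempty := ⟨I (u 0), 0, le_refl 0, hT, rfl⟩
  set c : ℝ := sInf S with hc
  have hcle : ∀ t : ℝ, 0 ≤ t → t < T → c ≤ I (u t) :=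
    fun t h1 h2 => csInf_le hbdd ⟨t, h1, h2, rfl⟩
  -- Cauchy
  have hneT : (nhdsWithin T (Set.Iio T)).NeBot := nhdsLT_neBot T
  have hC : Cauchy (Filter.map u (nhdsWithin T (Set.Iio T))) := by
    rw [Metric.cauchy_iff]
    refine ⟨Filter.map_neBot, fun ε hε => ?_⟩
    have hη : (0:ℝ) < ε ^ 2 / (2 * T) := by positivity
    obtain ⟨y, ⟨t0, ht0a, ht0b, rfl⟩, hy⟩ :=
      exists_lt_of_csInf_lt hSne (lt_add_of_pos_right c hη)
    refine ⟨u '' Ioo t0 T, Filter.image_mem_map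
      (Ioo_mem_nhdsLT_of_mem ⟨ht0b, le_refl T⟩), ?_⟩
    rintro x ⟨a, ha, rfl⟩ y ⟨b, hb, rfl⟩
    have key : ∀ a b : ℝ, a ∈ Ioo t0 T → b ∈ Ioo t0 T → a ≤ b →
        dist (u a) (u b) < ε := by
      intro a b ha hb hab
      have ha0 : 0 ≤ a := le_of_lt (lt_of_le_of_lt ht0a ha.1)
      have hIa : I (u a) ≤ I (u t0) := hmono t0 a ht0a (le_of_lt ha.1) ha.2
      have hIb : c ≤ I (u b) := hcle b (ha0.trans hab) hb.2
      have hd := hest (ε / (2 * T)) (by positivity) a b ha0 hab hb.2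
      rw [dist_eq_norm, norm_sub_rev]
      have hba : b - a ≤ T := by linarith [hb.2]
      have e1 : ε / (2 * T) / 2 * (b - a) ≤ ε / 4 := by
        have h1 : ε / (2 * T) / 2 * (b - a) ≤ ε / (2 * T) / 2 * T :=
          mul_le_mul_of_nonneg_left hba (by positivity)
        have h2 : ε / (2 * T) / 2 * T = ε / 4 := by field_simp; ring
        linarith
      have e2 : (I (u a) - I (u b)) / (2 * (ε / (2 * T))) < ε / 2 := by
        have hden : 2 * (ε / (2 * T)) = ε / T := by field_simp
        have hpos : (0:ℝ) < ε / T := by positivity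
        have h1 : (I (u a) - I (u b)) / (ε / T) < (ε ^ 2 / (2 * T)) / (ε / T) :=
          (div_lt_div_iff_of_pos_right hpos).mpr (by linarith)
        have h2 : (ε ^ 2 / (2 * T)) / (ε / T) = ε / 2 := by
          field_simp
        rw [hden]; linarith
      linarith
    rcases le_total a b with h | h
    · exact key a b ha hb h
    · rw [dist_comm]; exact key b a hb ha h
  obtain ⟨w, hw⟩ := CompleteSpace.complete hC
  refine ⟨w, hw, ?_⟩
  have hIcont : ContinuousAt I w := (hgrad w).differentiableAt.continuousAt
  have h1 : Filter.Tendsto (fun t => I (u t)) (nhdsWithin T (Set.Iio T)) (nhds (I w)) :=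
    hIcont.tendsto.comp hw
  have h2 : ∀ᶠ t in nhdsWithin T (Set.Iio T), I (u t) ≤ I (u 0) := by
    filter_upwards [Ioo_mem_nhdsLT_of_mem (⟨hT, le_refl T⟩ : T ∈ Ioc 0 T)] with t ht
    exact hmono 0 t (le_refl 0) (le_of_lt ht.1) ht.2
  exact le_of_tendsto h1 h2
end

section
/- Let H be a real Hilbert space, let I : H → ℝ be Fréchet differentiable with continuous gradient ∇I : H → H, and let u : [0,∞) → H be differentiable with u′(t) = −∇I(u(t)) for all t ≥ 0. Assume c̃ := inf_{t ≥ 0} I(u(t)) > −∞, and assume I satisfies the Palais–Smale condition: every sequence (v_n) in H with (I(v_n)) bounded and ∇I(v_n) → 0 has a convergent subsequence. Then there exist a sequence t_n → ∞ and a point ū₀ ∈ H such that u(t_n) → ū₀ in H, ∇I(ū₀) = 0, and c̃ ≤ I(ū₀) ≤ I(u(0)). -/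
/-- Abstract form of Lemma 2.2(2): along a global steepest-descent trajectory
with energy bounded below, the Palais–Smale condition yields a sequence
`t_n → ∞` and a critical point `ū₀` with `u(t_n) → ū₀` and
`c̃ ≤ I(ū₀) ≤ I(u(0))`. -/
theorem stmt_10 {H : Type*} [NormedAddCommGroup H] [InnerProductSpace ℝ H]
    [CompleteSpace H]
    (I : H → ℝ) (I' : H → H) (hgrad : ∀ v : H, HasGradientAt I (I' v) v)
    (hI'cont : Continuous I')
    (u : ℝ → H) (hu : ∀ t : ℝ, 0 ≤ t → HasDerivAt u (-I' (u t)) t)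
    (c : ℝ) (hc : IsGLB {y : ℝ | ∃ t : ℝ, 0 ≤ t ∧ y = I (u t)} c)
    (hPS : ∀ v : ℕ → H, (∃ M : ℝ, ∀ n, |I (v n)| ≤ M) →
      Filter.Tendsto (fun n => I' (v n)) Filter.atTop (nhds 0) →
      ∃ (φ : ℕ → ℕ) (w : H), StrictMono φ ∧
        Filter.Tendsto (fun n => v (φ n)) Filter.atTop (nhds w)) :
    ∃ (ts : ℕ → ℝ) (w : H),
      Filter.Tendsto ts Filter.atTop Filter.atTop ∧
      Filter.Tendsto (fun n => u (ts n)) Filter.atTop (nhds w) ∧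
      I' w = 0 ∧ c ≤ I w ∧ I w ≤ I (u 0) := by
  set g : ℝ → ℝ := fun t => I (u t) with hg
  -- derivative of g
  have hgd : ∀ t : ℝ, 0 ≤ t → HasDerivAt g (-(‖I' (u t)‖^2)) t := by
    intro t ht
    have h1 := (hgrad (u t)).hasFDerivAt.comp_hasDerivAt t (hu t ht)
    have : (InnerProductSpace.toDual ℝ H (I' (u t))) (-I' (u t)) = -(‖I' (u t)‖^2) := by
      simp [InnerProductSpace.toDual_apply_apply, real_inner_self_eq_norm_sq]
    rwa [this] at h1
  -- lower bound on g
  have hlb : ∀ t : ℝ, 0 ≤ t → c ≤ g t := fun t ht => hc.1 ⟨t, ht, rfl⟩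
  -- g antitone on [0, ∞)
  have hcont : ContinuousOn g (Set.Ici (0:ℝ)) :=
    fun t ht => ((hgd t ht).continuousAt).continuousWithinAt
  have hanti : AntitoneOn g (Set.Ici (0:ℝ)) := by
    apply antitoneOn_of_deriv_nonpos (convex_Ici 0) hcont
    · intro t ht
      rw [interior_Ici] at ht
      exact ((hgd t (le_of_lt ht)).differentiableAt).differentiableWithinAt
    · intro t ht
      rw [interior_Ici] at ht
      rw [(hgd t (le_of_lt ht)).deriv]
      simp [neg_nonpos]
  have hub : ∀ t : ℝ, 0 ≤ t → g t ≤ g 0 := fun t ht =>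
    hanti Set.self_mem_Ici ht ht
  -- sequence a n = g n converges
  set a : ℕ → ℝ := fun n => g n with ha
  have hamono : Antitone a := by
    intro m n hmn
    exact hanti (Set.mem_Ici.mpr (Nat.cast_nonneg m)) (Set.mem_Ici.mpr (Nat.cast_nonneg n))
      (by exact_mod_cast hmn)
  have habdd : BddBelow (Set.range a) :=
    ⟨c, by rintro x ⟨n, rfl⟩; exact hlb n (Nat.cast_nonneg n)⟩
  have hconv : Filter.Tendsto a Filter.atTop (nhds (⨅ n, a n)) :=
    tendsto_atTop_ciInf hamono habdd
  have hdiff : Filter.Tendsto (fun n => a n - a (n+1)) Filter.atTop (nhds 0) := by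
    have h2 : Filter.Tendsto (fun n => a (n+1)) Filter.atTop (nhds (⨅ n, a n)) :=
      hconv.comp (Filter.tendsto_add_atTop_nat 1)
    simpa using hconv.sub h2
  -- MVT: choose ξ n ∈ (n, n+1)
  have hxi : ∀ n : ℕ, ∃ ξ ∈ Set.Ioo (n:ℝ) (n+1), ‖I' (u ξ)‖^2 = a n - a (n+1) := by
    intro n
    obtain ⟨ξ, hξ, hξ2⟩ := exists_hasDerivAt_eq_slope g (fun t => -(‖I' (u t)‖^2))
      (by linarith [Nat.cast_nonneg (α := ℝ) n] : (n:ℝ) < n+1)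
      (hcont.mono (fun x hx => le_trans (Nat.cast_nonneg n) hx.1))
      (fun x hx => hgd x (le_trans (Nat.cast_nonneg n) (le_of_lt hx.1)))
    refine ⟨ξ, hξ, ?_⟩
    have : -(‖I' (u ξ)‖^2) = (g (n+1) - g n) / (n+1 - n) := hξ2
    simp only [add_sub_cancel_left, div_one] at this
    have hcast : g ((n:ℝ)+1) = a (n+1) := by push_cast [ha]; ring_nf
    rw [hcast] at this
    linarith [this]
  choose ξ hξmem hξeq using hxi
  have hξnn : ∀ n, (0:ℝ) ≤ ξ n := fun n =>
    le_of_lt (lt_of_le_of_lt (Nat.cast_nonneg n) (hξmem n).1)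
  -- I'(u (ξ n)) → 0
  have hnorm2 : Filter.Tendsto (fun n => ‖I' (u (ξ n))‖^2) Filter.atTop (nhds 0) := by
    simpa [hξeq] using hdiff
  have hnorm : Filter.Tendsto (fun n => ‖I' (u (ξ n))‖) Filter.atTop (nhds 0) := by
    have := hnorm2.sqrt
    simpa [Real.sqrt_sq (norm_nonneg _)] using this
  have hItend : Filter.Tendsto (fun n => I' (u (ξ n))) Filter.atTop (nhds 0) :=
    tendsto_zero_iff_norm_tendsto_zero.mpr hnorm
  -- boundedness of energies
  have hbdd : ∃ M : ℝ, ∀ n, |I (u (ξ n))| ≤ M := by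
    refine ⟨max |g 0| |c|, fun n => abs_le.mpr ⟨?_, ?_⟩⟩
    · calc -(max |g 0| |c|) ≤ -|c| := by simp
        _ ≤ c := neg_abs_le c
        _ ≤ I (u (ξ n)) := hlb _ (hξnn n)
    · calc I (u (ξ n)) ≤ g 0 := hub _ (hξnn n)
        _ ≤ |g 0| := le_abs_self _
        _ ≤ max |g 0| |c| := le_max_left _ _
  obtain ⟨φ, w, hφ, hw⟩ := hPS (fun n => u (ξ n)) hbdd hItend
  refine ⟨fun n => ξ (φ n), w, ?_, hw, ?_, ?_, ?_⟩
  · refine Filter.tendsto_atTop_mono ?_ (tendsto_natCast_atTop_atTop (R := ℝ))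
    intro n
    exact le_trans (by exact_mod_cast hφ.le_apply) (le_of_lt (hξmem (φ n)).1)
  · have h1 : Filter.Tendsto (fun n => I' (u (ξ (φ n)))) Filter.atTop (nhds (I' w)) :=
      (hI'cont.tendsto w).comp hw
    have h2 : Filter.Tendsto (fun n => I' (u (ξ (φ n)))) Filter.atTop (nhds 0) :=
      hItend.comp hφ.tendsto_atTop
    exact tendsto_nhds_unique h1 h2
  · have h1 : Filter.Tendsto (fun n => I (u (ξ (φ n)))) Filter.atTop (nhds (I w)) :=
      ((hgrad w).hasFDerivAt.continuousAt.tendsto).comp hw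
    exact ge_of_tendsto h1 (Filter.Eventually.of_forall fun n => hlb _ (hξnn (φ n)))
  · have h1 : Filter.Tendsto (fun n => I (u (ξ (φ n)))) Filter.atTop (nhds (I w)) :=
      ((hgrad w).hasFDerivAt.continuousAt.tendsto).comp hw
    exact le_of_tendsto h1 (Filter.Eventually.of_forall fun n => hub _ (hξnn (φ n)))
end

section
/- Let X be a real Banach space, let P ⊆ X be a nonempty closed convex set, let A : X → X be Lipschitz continuous with A(P) ⊆ P, let 0 < T ≤ ∞, and let u : [0,T) → X be differentiable with u′(t) = A(u(t)) − u(t) for all t ∈ [0,T) and u(0) ∈ P. Then u(t) ∈ P for all t ∈ [0,T). -/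
set_option maxHeartbeats 1000000

open Metric Set Filter Real
open scoped Topology NNReal

/-- Invariance statement in the proof of Lemma 2.6: a nonempty closed convex
set `P` with `A(P) ⊆ P`, for `A` Lipschitz continuous, is positively invariant
under the descending flow `u′ = A(u) − u` on `[0,T)`, `0 < T ≤ ∞`. -/
theorem stmt_13 {X : Type*} [NormedAddCommGroup X] [NormedSpace ℝ X]
    [CompleteSpace X]
    (P : Set X) (hPne : P.Nonempty) (hPclosed : IsClosed P) (hPconv : Convex ℝ P)
    (A : X → X) (hA : ∃ K : NNReal, LipschitzWith K A) (hAP : A '' P ⊆ P)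
    (T : EReal) (hT : 0 < T) (u : ℝ → X)
    (hu : ∀ t : ℝ, 0 ≤ t → (t : EReal) < T → HasDerivAt u (A (u t) - u t) t)
    (hu0 : u 0 ∈ P) :
    ∀ t : ℝ, 0 ≤ t → (t : EReal) < T → u t ∈ P := by
  obtain ⟨K, hK⟩ := hA
  set K' : ℝ := (K : ℝ) with hK'
  clear_value K'
  have hK0 : 0 ≤ K' := by rw [hK']; exact K.coe_nonneg
  intro t ht htT
  set f : ℝ → ℝ := fun s => infDist (u s) P with hf
  -- continuity of f on [0, t]
  have hcont : ContinuousOn f (Icc 0 t) := by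
    intro x hx
    have hxT : (x : EReal) < T :=
      lt_of_le_of_lt (by exact_mod_cast hx.2) htT
    exact ((continuous_infDist_pt P).continuousAt.comp
      (hu x hx.1 hxT).continuousAt).continuousWithinAt
  -- slope estimate
  have hslope : ∀ x ∈ Ico (0:ℝ) t, ∀ r, (K' + 1) * f x < r →
      ∃ᶠ z in 𝓝[>] x, (z - x)⁻¹ * (f z - f x) < r := by
    intro x hx r hr
    apply Filter.Eventually.frequently
    have hxT : (x : EReal) < T :=
      lt_trans (by exact_mod_cast hx.2) htT
    have hd := hu x hx.1 hxT
    obtain ⟨c, hceq, hcpos⟩ : ∃ c : ℝ, r = c + (K' + 1) * f x ∧ 0 < c :=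
      ⟨r - (K' + 1) * f x, by ring, by linarith⟩
    have hfx0 : 0 ≤ f x := infDist_nonneg
    -- little-o bound
    have hlo := (hasDerivAt_iff_isLittleO.1 hd).bound (show (0:ℝ) < c/4 by linarith)
    have hlo' : ∀ᶠ z in 𝓝[>] x,
        ‖u z - u x - (z - x) • (A (u x) - u x)‖ ≤ c/4 * ‖z - x‖ :=
      hlo.filter_mono nhdsWithin_le_nhds
    obtain ⟨η, hη1, hη2, hηpos⟩ :
        ∃ η : ℝ, η ≤ 1 ∧ 2 * (K' + 2) * η ≤ c ∧ 0 < η := by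
      refine ⟨min 1 (c / (2 * (K' + 2))), min_le_left _ _, ?_, lt_min one_pos (by positivity)⟩
      have := min_le_right (1:ℝ) (c / (2 * (K' + 2)))
      calc 2 * (K' + 2) * min 1 (c / (2 * (K' + 2)))
          ≤ 2 * (K' + 2) * (c / (2 * (K' + 2))) := by
            apply mul_le_mul_of_nonneg_left this (by linarith)
        _ = c := by field_simp
    have hsmall : ∀ᶠ z in 𝓝[>] x, z < x + η :=
      (eventually_lt_nhds (by linarith : x < x + η)).filter_mono nhdsWithin_le_nhds
    filter_upwards [hlo', hsmall, self_mem_nhdsWithin] with z hz1 hz2 hz3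
    obtain ⟨h, hh, hpos, hlt⟩ : ∃ h : ℝ, z = x + h ∧ 0 < h ∧ h < η :=
      ⟨z - x, by ring, sub_pos.2 hz3, by linarith⟩
    have hzx : z - x = h := by rw [hh]; ring
    rw [hzx] at hz1
    have hle1 : h ≤ 1 := by linarith
    have hlt2 : (K' + 2) * h < c / 2 := by nlinarith
    -- choose y ∈ P close to u x
    obtain ⟨y, hy, hdy⟩ := (infDist_lt_iff hPne).1
      (show infDist (u x) P < f x + h * h by
        have : infDist (u x) P = f x := by rw [hf]
        nlinarith)
    have hN0 : (0:ℝ) ≤ ‖u x - y‖ := norm_nonneg _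
    have hny : ‖u x - y‖ ≤ f x + h * h := by
      rw [← dist_eq_norm]; exact le_of_lt hdy
    have hAy : A y ∈ P := hAP ⟨y, hy, rfl⟩
    have hw : (1 - h) • y + h • A y ∈ P :=
      hPconv hy hAy (by linarith) hpos.le (by ring)
    have hfz : f z ≤ ‖u z - ((1 - h) • y + h • A y)‖ := by
      rw [hf]
      simpa [dist_eq_norm] using infDist_le_dist_of_mem (x := u z) hw
    have hdecomp : u z - ((1 - h) • y + h • A y)
        = (u z - u x - h • (A (u x) - u x))
          + ((1 - h) • (u x - y) + h • (A (u x) - A y)) := by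
      simp only [smul_sub, sub_smul, one_smul]
      abel
    have hlip : ‖A (u x) - A y‖ ≤ K' * ‖u x - y‖ := by
      rw [hK']
      simpa [dist_eq_norm] using hK.dist_le_mul (u x) y
    have hbound : ‖u z - ((1 - h) • y + h • A y)‖
        ≤ c/4 * h + (1 - h) * ‖u x - y‖ + h * (K' * ‖u x - y‖) := by
      rw [hdecomp]
      have t1 : ‖u z - u x - h • (A (u x) - u x)‖ ≤ c/4 * h := by
        calc ‖u z - u x - h • (A (u x) - u x)‖ ≤ c/4 * ‖h‖ := hz1
          _ = c/4 * h := by rw [Real.norm_eq_abs, abs_of_pos hpos]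
      have t2 : ‖(1 - h) • (u x - y)‖ = (1 - h) * ‖u x - y‖ := by
        rw [norm_smul, Real.norm_eq_abs, abs_of_nonneg (by linarith : (0:ℝ) ≤ 1 - h)]
      have t3 : ‖h • (A (u x) - A y)‖ ≤ h * (K' * ‖u x - y‖) := by
        rw [norm_smul, Real.norm_eq_abs, abs_of_pos hpos]
        exact mul_le_mul_of_nonneg_left hlip hpos.le
      calc _ ≤ ‖u z - u x - h • (A (u x) - u x)‖
              + ‖(1 - h) • (u x - y) + h • (A (u x) - A y)‖ := norm_add_le _ _
        _ ≤ ‖u z - u x - h • (A (u x) - u x)‖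
              + (‖(1 - h) • (u x - y)‖ + ‖h • (A (u x) - A y)‖) := by
              gcongr; exact norm_add_le _ _
        _ ≤ c/4 * h + ((1 - h) * ‖u x - y‖ + h * (K' * ‖u x - y‖)) := by
              rw [t2]; gcongr
        _ = c/4 * h + (1 - h) * ‖u x - y‖ + h * (K' * ‖u x - y‖) := by ring
    have hb1 : f z ≤ c/4 * h + (1 - h) * ‖u x - y‖ + h * (K' * ‖u x - y‖) :=
      hfz.trans hbound
    have hm1 : h * (K' * ‖u x - y‖) ≤ h * (K' * (f x + h * h)) := by
      apply mul_le_mul_of_nonneg_left (mul_le_mul_of_nonneg_left hny hK0) hpos.le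
    have hm2 : (1 - h) * ‖u x - y‖ ≤ (1 - h) * (f x + h * h) :=
      mul_le_mul_of_nonneg_left hny (by linarith)
    have key : f z - f x ≤ c/4 * h + h * h + h * ((K' - 1) * (f x + h * h)) := by
      linarith [hb1, hm1, hm2]
    have hX0 : (0:ℝ) ≤ f x + h * h := by nlinarith
    have q1 : h * ((K' - 1) * (f x + h * h)) ≤ h * ((K' + 1) * (f x + h * h)) := by
      apply mul_le_mul_of_nonneg_left _ hpos.le
      nlinarith
    have hhh : h * h ≤ h := by nlinarith
    have q2 : h * ((K' + 1) * (h * h)) ≤ h * ((K' + 1) * h) := by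
      apply mul_le_mul_of_nonneg_left (mul_le_mul_of_nonneg_left hhh (by linarith)) hpos.le
    have step2 : h * ((K' + 2) * h) < h * (c / 2) :=
      mul_lt_mul_of_pos_left hlt2 hpos
    -- conclude
    rw [hzx, show h⁻¹ * (f z - f x) = (f z - f x) / h by ring, div_lt_iff₀ hpos]
    have hch : 0 < c * h := mul_pos hcpos hpos
    have hrh : r * h = c * h + (K' + 1) * f x * h := by rw [hceq]; ring
    linarith [key, q1, q2, step2, hch, hrh]
  -- Grönwall
  have hgron := le_gronwallBound_of_liminf_deriv_right_le
    (f := f) (f' := fun x => (K' + 1) * f x) (δ := 0) (K := K' + 1) (ε := 0)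
    (a := 0) (b := t) hcont hslope
    (by simp [hf, infDist_zero_of_mem hu0]) (fun x _ => by simp)
  have hft : f t ≤ 0 := by
    have := hgron t ⟨ht, le_refl t⟩
    rwa [sub_zero, gronwallBound_ε0_δ0] at this
  have : infDist (u t) P = 0 := le_antisymm (by rw [← hf] at *; exact hft) infDist_nonneg
  exact (hPclosed.mem_iff_infDist_zero hPne).2 this
end

section
/- Let X be a real Banach space, let P ⊆ X be a nonempty closed convex set with nonempty interior, let A : X → X be Lipschitz continuous with A(P) ⊆ P, let 0 < T ≤ ∞, and let u : [0,T) → X be differentiable with u′(t) = A(u(t)) − u(t) for all t ∈ [0,T) and u(0) = u₀ ∈ int(P), the topological interior of P. Then u(t) ∈ int(P) for all t ∈ [0,T). -/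
open MeasureTheory Set
open scoped NNReal ENNReal

/-- Interior-invariance statement in the proof of Lemma 2.6: if `P` is a
nonempty closed convex set with nonempty interior, `A` is Lipschitz with
`A(P) ⊆ P`, and `u′ = A(u) − u` on `[0,T)` with `u(0) ∈ int P`, then
`u(t) ∈ int P` for all `t ∈ [0,T)`. -/
theorem stmt_14 {X : Type*} [NormedAddCommGroup X] [NormedSpace ℝ X]
    [CompleteSpace X]
    (P : Set X) (hPne : P.Nonempty) (hPclosed : IsClosed P) (hPconv : Convex ℝ P)
    (hPint : (interior P).Nonempty)
    (A : X → X) (hA : ∃ K : NNReal, LipschitzWith K A) (hAP : A '' P ⊆ P)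
    (T : EReal) (hT : 0 < T) (u : ℝ → X)
    (hu : ∀ t : ℝ, 0 ≤ t → (t : EReal) < T → HasDerivAt u (A (u t) - u t) t)
    (hu0 : u 0 ∈ interior P) :
    ∀ t : ℝ, 0 ≤ t → (t : EReal) < T → u t ∈ interior P := by
  intro t ht0 htT
  by_contra hbad
  obtain ⟨K, hK⟩ := hA
  have hAcont : Continuous A := hK.continuous
  -- every point of `[0, t]` is a legal time
  have hlegal : ∀ s : ℝ, s ∈ Icc 0 t → 0 ≤ s ∧ (s : EReal) < T := fun s hs =>
    ⟨hs.1, lt_of_le_of_lt (by exact_mod_cast hs.2) htT⟩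
  have hucont : ∀ s ∈ Icc (0:ℝ) t, ContinuousAt u s := fun s hs =>
    (hu s (hlegal s hs).1 (hlegal s hs).2).continuousAt
  -- the set of bad times
  set B : Set ℝ := Icc 0 t ∩ u ⁻¹' (interior P)ᶜ with hB
  have htB : t ∈ B := ⟨⟨ht0, le_rfl⟩, hbad⟩
  have hBclosed : IsClosed B := by
    rw [← isSeqClosed_iff_isClosed]
    intro x a hx hxa
    have haIcc : a ∈ Icc (0:ℝ) t := isClosed_Icc.isSeqClosed (fun n => (hx n).1) hxa
    refine ⟨haIcc, ?_⟩
    have : Filter.Tendsto (fun n => u (x n)) Filter.atTop (nhds (u a)) :=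
      ((hucont a haIcc).tendsto).comp hxa
    exact (isOpen_interior.isClosed_compl).isSeqClosed (fun n => (hx n).2) this
  have hBne : B.Nonempty := ⟨t, htB⟩
  have hBbdd : BddBelow B := ⟨0, fun x hx => hx.1.1⟩
  set c := sInf B with hc
  have hcB : c ∈ B := hBclosed.csInf_mem hBne hBbdd
  have hc0 : 0 < c := by
    rcases lt_or_eq_of_le hcB.1.1 with h | h
    · exact h
    · exact absurd hu0 (by rw [← h] at hcB; exact hcB.2)
  have hcmem : ∀ s : ℝ, 0 ≤ s → s < c → u s ∈ interior P := by
    intro s hs0 hsc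
    by_contra hs
    exact absurd (csInf_le hBbdd ⟨⟨hs0, hsc.le.trans hcB.1.2⟩, hs⟩) (not_le.mpr hsc)
  -- continuity of the integrand on [0, c]
  have hIccsub : Icc (0:ℝ) c ⊆ Icc 0 t := Icc_subset_Icc le_rfl hcB.1.2
  have hcontOn : ContinuousOn (fun s => Real.exp s • A (u s)) (Icc 0 c) := by
    refine ContinuousOn.smul Real.continuous_exp.continuousOn ?_
    exact hAcont.comp_continuousOn (fun s hs => (hucont s (hIccsub hs)).continuousWithinAt)
  have hInt : IntegrableOn (fun s => Real.exp s • A (u s)) (Icc 0 c) volume :=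
    hcontOn.integrableOn_compact isCompact_Icc
  -- fundamental theorem of calculus for `exp s • u s`
  have hFTC : Real.exp c • u c - Real.exp 0 • u 0
      = ∫ s in (0:ℝ)..c, Real.exp s • A (u s) := by
    refine (intervalIntegral.integral_eq_sub_of_hasDerivAt (f := fun s => Real.exp s • u s) ?_ ?_).symm
    · intro s hs
      rw [uIcc_of_le hc0.le] at hs
      have hd := (Real.hasDerivAt_exp s).smul (hu s (hlegal s (hIccsub hs)).1 (hlegal s (hIccsub hs)).2)
      convert hd using 1
      · rfl
      rw [smul_sub]; abel
    · rw [intervalIntegrable_iff_integrableOn_Icc_of_le hc0.le]; exact hInt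
  have hFTC' : Real.exp c • u c = u 0 + ∫ s in Ioc (0:ℝ) c, Real.exp s • A (u s) := by
    rw [intervalIntegral.integral_of_le hc0.le] at hFTC
    rw [← hFTC]; simp
  -- the weighted measure
  set ν : Measure ℝ := volume.withDensity (fun s => ENNReal.ofReal (Real.exp s)) with hν
  have hexpInt : IntegrableOn Real.exp (Ioc 0 c) volume :=
    (Real.continuous_exp.continuousOn.integrableOn_compact isCompact_Icc).mono_set Ioc_subset_Icc_self
  have hνIoc : ν (Ioc 0 c) = ENNReal.ofReal (Real.exp c - 1) := by
    rw [hν, withDensity_apply _ measurableSet_Ioc,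
      ← ofReal_integral_eq_lintegral_ofReal hexpInt
        (Filter.Eventually.of_forall fun s => (Real.exp_pos s).le)]
    congr 1
    rw [← intervalIntegral.integral_of_le hc0.le]
    simp [Real.exp_zero]
  have hν0 : ν (Ioc 0 c) ≠ 0 := by
    rw [hνIoc]
    simp only [ne_eq, ENNReal.ofReal_eq_zero, not_le, sub_pos]
    rw [← Real.exp_zero]
    exact Real.exp_lt_exp.mpr hc0
  have hνtop : ν (Ioc 0 c) ≠ ⊤ := by rw [hνIoc]; exact ENNReal.ofReal_ne_top
  -- a.e. membership of `A ∘ u` in `P`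
  have hmemvol : ∀ᵐ s ∂(volume.restrict (Ioc (0:ℝ) c)), A (u s) ∈ P := by
    have h1 : ∀ᵐ s ∂(volume.restrict (Ioc (0:ℝ) c)), s ∈ Ioc 0 c :=
      ae_restrict_mem measurableSet_Ioc
    have h2 : ∀ᵐ s ∂(volume.restrict (Ioc (0:ℝ) c)), s ≠ c :=
      ae_restrict_of_ae (by simp [ae_iff])
    filter_upwards [h1, h2] with s hs hsne
    exact hAP ⟨u s, interior_subset (hcmem s hs.1.le (lt_of_le_of_ne hs.2 hsne)), rfl⟩
  have hmemae : ∀ᵐ s ∂(ν.restrict (Ioc (0:ℝ) c)), A (u s) ∈ P :=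
    ((withDensity_absolutelyContinuous volume _).restrict _).ae_le hmemvol
  -- density as an `ℝ≥0`-valued function
  have hdens_meas : Measurable fun s : ℝ => Real.toNNReal (Real.exp s) :=
    (measurable_id.exp).real_toNNReal
  have hνd : ν = volume.withDensity fun s => ((Real.toNNReal (Real.exp s) : ℝ≥0) : ℝ≥0∞) := by
    rw [hν]; rfl
  have hsmul_eq : ∀ s : ℝ, (Real.toNNReal (Real.exp s) : ℝ≥0) • A (u s)
      = Real.exp s • A (u s) := by
    intro s
    rw [NNReal.smul_def, Real.coe_toNNReal _ (Real.exp_pos s).le]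
  -- integrability w.r.t. ν
  have hIntν : IntegrableOn (fun s => A (u s)) (Ioc 0 c) ν := by
    rw [IntegrableOn, hνd, restrict_withDensity measurableSet_Ioc,
      integrable_withDensity_iff_integrable_smul hdens_meas]
    refine (hInt.mono_set Ioc_subset_Icc_self).congr_fun ?_ measurableSet_Ioc
    intro s _
    exact (hsmul_eq s).symm
  -- the average lies in `P`
  set v := ⨍ s in Ioc (0:ℝ) c, A (u s) ∂ν with hv
  have hvP : v ∈ P := hPconv.set_average_mem hPclosed hν0 hνtop hmemae hIntν
  -- identify the integral
  have hint_ν : ∫ s in Ioc (0:ℝ) c, A (u s) ∂ν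
      = ∫ s in Ioc (0:ℝ) c, Real.exp s • A (u s) ∂volume := by
    rw [hνd, restrict_withDensity measurableSet_Ioc,
      integral_withDensity_eq_integral_smul hdens_meas]
    exact setIntegral_congr_fun measurableSet_Ioc fun s _ => hsmul_eq s
  have hec1 : Real.exp c - 1 ≠ 0 := ne_of_gt (by
    have := Real.exp_lt_exp.mpr hc0
    rw [Real.exp_zero] at this; linarith)
  have hint_eq : ∫ s in Ioc (0:ℝ) c, Real.exp s • A (u s) ∂volume
      = (Real.exp c - 1) • v := by
    rw [hv, setAverage_eq, measureReal_def, hνIoc, ENNReal.toReal_ofReal (by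
      have := Real.exp_lt_exp.mpr hc0
      rw [Real.exp_zero] at this; linarith), hint_ν, smul_smul,
      mul_inv_cancel₀ hec1, one_smul]
  -- conclude: `u c` is a convex combination of `u 0` and `v`
  have hcomb : u c = (Real.exp c)⁻¹ • u 0 + (1 - (Real.exp c)⁻¹) • v := by
    have h := hFTC'
    rw [hint_eq] at h
    have h2 := congrArg (fun x => (Real.exp c)⁻¹ • x) h
    simp only [smul_add, smul_smul, inv_mul_cancel₀ (Real.exp_ne_zero c), one_smul] at h2
    rw [h2]
    congr 2
    field_simp
  have hexp1 : (1:ℝ) ≤ Real.exp c := by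
    rw [← Real.exp_zero]; exact Real.exp_le_exp.mpr hc0.le
  have : u c ∈ interior P := by
    rw [hcomb]
    refine hPconv.combo_interior_self_mem_interior hu0 hvP
      (inv_pos.mpr (Real.exp_pos c)) ?_ (by ring)
    rw [sub_nonneg]
    exact inv_le_one_of_one_le₀ hexp1
  exact hcB.2 this
end

section
/- Let X be a topological space and let φ : [0,∞) × X → X be a continuous semiflow, i.e. φ is continuous, φ(0,x) = x for all x, and φ(s+t,x) = φ(s, φ(t,x)) for all s,t ≥ 0 and x ∈ X. Let D ⊆ X be open and positively invariant (φ(t,x) ∈ D for all x ∈ D, t ≥ 0), and let C(D) = {x ∈ X : there exists t ≥ 0 with φ(t,x) ∈ D}. Then C(D) is positively invariant; and if C(D) ≠ X, then the frontier ∂C(D) of C(D) is positively invariant: for every x ∈ ∂C(D) and every t ≥ 0, φ(t,x) ∈ ∂C(D). -/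
/-- Abstract form of Lemma 2.5(2): if `D` is open and positively invariant
under a continuous semiflow `φ`, then `C(D) = {x : ∃ t ≥ 0, φ(t,x) ∈ D}` is
positively invariant, and if `C(D) ≠ X` its frontier is positively invariant. -/
theorem stmt_16 {X : Type*} [TopologicalSpace X]
    (φ : NNReal × X → X) (hφcont : Continuous φ)
    (hφ0 : ∀ x : X, φ (0, x) = x)
    (hφadd : ∀ (s t : NNReal) (x : X), φ (s + t, x) = φ (s, φ (t, x)))
    (D : Set X) (hDopen : IsOpen D)
    (hDinv : ∀ x ∈ D, ∀ t : NNReal, φ (t, x) ∈ D) :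
    (∀ x ∈ {x : X | ∃ t : NNReal, φ (t, x) ∈ D}, ∀ t : NNReal,
      φ (t, x) ∈ {x : X | ∃ t : NNReal, φ (t, x) ∈ D}) ∧
    ({x : X | ∃ t : NNReal, φ (t, x) ∈ D} ≠ Set.univ →
      ∀ x ∈ frontier {x : X | ∃ t : NNReal, φ (t, x) ∈ D}, ∀ t : NNReal,
        φ (t, x) ∈ frontier {x : X | ∃ t : NNReal, φ (t, x) ∈ D}) := by
  set C : Set X := {x : X | ∃ t : NNReal, φ (t, x) ∈ D} with hC
  have hinv : ∀ x ∈ C, ∀ t : NNReal, φ (t, x) ∈ C := by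
    rintro x ⟨s, hs⟩ t
    refine ⟨s, ?_⟩
    rw [← hφadd]
    have : φ (s + t, x) = φ (t + s, x) := by rw [add_comm]
    rw [this, hφadd]
    exact hDinv _ hs t
  refine ⟨hinv, fun _ x hx t => ?_⟩
  have hCopen : IsOpen C := by
    have : C = ⋃ t : NNReal, (fun x => φ (t, x)) ⁻¹' D := by
      ext y; simp [hC, Set.mem_iUnion]
    rw [this]
    exact isOpen_iUnion fun t =>
      hDopen.preimage (hφcont.comp (continuous_const.prodMk continuous_id))
  rw [hCopen.frontier_eq] at hx ⊢
  obtain ⟨hxcl, hxnot⟩ := hx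
  constructor
  · have hcont : Continuous fun y => φ (t, y) :=
      hφcont.comp (continuous_const.prodMk continuous_id)
    exact (Set.MapsTo.closure (fun y hy => hinv y hy t) hcont) hxcl
  · intro hmem
    obtain ⟨s, hs⟩ := hmem
    exact hxnot ⟨s + t, by rw [hφadd]; exact hs⟩
end

section
/- Let X be a real normed space and let φ : [0,∞) × X → X be a continuous semiflow, i.e. φ is continuous, φ(0,x) = x for all x, and φ(s+t,x) = φ(s, φ(t,x)) for all s,t ≥ 0 and x ∈ X. Let Φ : X → ℝ be continuous and non-increasing along the flow, i.e. Φ(φ(t,x)) ≤ Φ(x) for all x ∈ X and t ≥ 0. Let D ⊆ X be a nonempty open positively invariant set (φ(t,x) ∈ D for all x ∈ D, t ≥ 0) with C(D) := {x ∈ X : ∃ t ≥ 0, φ(t,x) ∈ D} ≠ X, and let b ∈ ℝ be such that Φ(y) ≥ b for all y in the frontier ∂D of D. Then Φ(x) ≥ b for every x in the frontier ∂C(D) of C(D); in other words, inf_{∂C(D)} Φ ≥ inf_{∂D} Φ. -/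
/-- Abstract form of Lemma 2.5(3): for a functional `Φ` continuous and
non-increasing along a continuous semiflow `φ` on a real normed space, and a
nonempty open positively invariant set `D` with `C(D) ≠ X`, any lower bound `b`
of `Φ` on the frontier of `D` is a lower bound of `Φ` on the frontier of
`C(D) = {x : ∃ t ≥ 0, φ(t,x) ∈ D}`. -/
theorem stmt_17 {X : Type*} [NormedAddCommGroup X] [NormedSpace ℝ X]
    (φ : NNReal × X → X) (hφcont : Continuous φ)
    (hφ0 : ∀ x : X, φ (0, x) = x)
    (hφadd : ∀ (s t : NNReal) (x : X), φ (s + t, x) = φ (s, φ (t, x)))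
    (Φ : X → ℝ) (hΦcont : Continuous Φ)
    (hΦdec : ∀ (x : X) (t : NNReal), Φ (φ (t, x)) ≤ Φ x)
    (D : Set X) (hDne : D.Nonempty) (hDopen : IsOpen D)
    (hDinv : ∀ x ∈ D, ∀ t : NNReal, φ (t, x) ∈ D)
    (hCD : {x : X | ∃ t : NNReal, φ (t, x) ∈ D} ≠ Set.univ)
    (b : ℝ) (hb : ∀ y ∈ frontier D, b ≤ Φ y) :
    ∀ x ∈ frontier {x : X | ∃ t : NNReal, φ (t, x) ∈ D}, b ≤ Φ x := by
  intro x hx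
  set C := {x : X | ∃ t : NNReal, φ (t, x) ∈ D} with hC
  have hCopen : IsOpen C := by
    have hEq : C = ⋃ t : NNReal, (fun y => φ (t, y)) ⁻¹' D := by
      ext y; simp [hC, Set.mem_iUnion]
    rw [hEq]
    exact isOpen_iUnion fun t =>
      hDopen.preimage (hφcont.comp (continuous_const.prodMk continuous_id))
  have hxC : x ∉ C := fun h => hx.2 (by rwa [hCopen.interior_eq])
  have key : ∀ y ∈ C \ closure D, b ≤ Φ y := by
    intro y hy
    obtain ⟨⟨t0, ht0⟩, hyD⟩ := hy
    set S := {t : NNReal | φ (t, y) ∈ D} with hS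
    have hSne : S.Nonempty := ⟨t0, ht0⟩
    have hSbdd : BddBelow S := OrderBot.bddBelow S
    have hcont : Continuous fun t : NNReal => φ (t, y) :=
      hφcont.comp (continuous_id.prodMk continuous_const)
    have hSopen : IsOpen S := hDopen.preimage hcont
    set t := sInf S with ht
    have htclos : φ (t, y) ∈ closure D := by
      have h1 : t ∈ closure S := csInf_mem_closure hSne hSbdd
      have h2 : closure S ⊆ (fun t => φ (t, y)) ⁻¹' closure D :=
        closure_minimal (fun s hs => subset_closure hs)
          (isClosed_closure.preimage hcont)
      exact h2 h1
    have htnD : φ (t, y) ∉ D := by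
      intro hmem
      have htpos : 0 < t := by
        rcases eq_zero_or_pos t with h | h
        · rw [h, hφ0] at hmem; exact absurd (subset_closure hmem) hyD
        · exact h
      obtain ⟨l, hl, hIoc⟩ :=
        exists_Ioc_subset_of_mem_nhds (hSopen.mem_nhds hmem) ⟨0, htpos⟩
      obtain ⟨s, hs1, hs2⟩ := exists_between hl
      have hsS : s ∈ S := hIoc ⟨hs1, le_of_lt hs2⟩
      exact absurd (csInf_le hSbdd hsS) (not_le.mpr hs2)
    have hbt : b ≤ Φ (φ (t, y)) :=
      hb _ ⟨htclos, fun h => htnD (by rwa [hDopen.interior_eq] at h)⟩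
    exact hbt.trans (hΦdec y t)
  by_cases hxD : x ∈ closure D
  · refine hb x ⟨hxD, fun h => hxC ?_⟩
    exact ⟨0, by rw [hφ0]; rwa [hDopen.interior_eq] at h⟩
  · have hxcl : x ∈ closure (C \ closure D) := by
      have hxclC : x ∈ closure C := hx.1
      rw [mem_closure_iff_nhds] at hxclC ⊢
      intro U hU
      have hU' : U ∩ (closure D)ᶜ ∈ nhds x :=
        Filter.inter_mem hU (isClosed_closure.isOpen_compl.mem_nhds hxD)
      obtain ⟨z, ⟨hzU, hzD⟩, hzC⟩ := hxclC _ hU'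
      exact ⟨z, hzU, hzC, hzD⟩
    exact closure_minimal key (isClosed_le continuous_const hΦcont) hxcl
end

section
/- Let H be a real Hilbert space and let I : H → ℝ be Fréchet differentiable whose gradient ∇I : H → H is Lipschitz continuous. Assume I satisfies the Palais–Smale condition: every sequence (v_n) in H with (I(v_n)) bounded and ∇I(v_n) → 0 has a convergent subsequence. Let D ⊆ H be a nonempty closed set that is positively invariant under the negative gradient flow, i.e. for every differentiable u : [0,∞) → H with u′(t) = −∇I(u(t)) for all t ≥ 0 and u(0) ∈ D, one has u(t) ∈ D for all t ≥ 0. Assume c̃ := inf_{v ∈ D} I(v) > −∞. Then there exists u₀ ∈ D with ∇I(u₀) = 0 and I(u₀) = c̃. -/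
open Set Filter



private lemma aux_local {H : Type*} [NormedAddCommGroup H] [NormedSpace ℝ H] [CompleteSpace H]
    (f : H → H) (K : NNReal) (hf : LipschitzWith K f) (t₀ : ℝ) (x₀ : H) :
    ∃ g : ℝ → H, g t₀ = x₀ ∧ ∀ t ∈ Icc t₀ (t₀ + ((K:ℝ)+1)⁻¹),
      HasDerivWithinAt g (f (g t)) (Icc t₀ (t₀ + ((K:ℝ)+1)⁻¹)) t := by
  set ε : ℝ := ((K:ℝ)+1)⁻¹ with hεdef
  have hK : (0:ℝ) ≤ K := K.coe_nonneg
  have hε : 0 < ε := by positivity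
  set a : ℝ := ‖f x₀‖ with ha
  have ha0 : 0 ≤ a := norm_nonneg _
  have hpl : IsPicardLindelof (fun _ => f) (tmin := t₀) (tmax := t₀ + ε) ⟨t₀, le_refl _, by linarith⟩ x₀
      (‖f x₀‖₊ + 1) 0 (‖f x₀‖₊ + K*(‖f x₀‖₊+1)) K := by
    apply IsPicardLindelof.of_time_independent
    · intro x hx
      have h1 : ‖f x - f x₀‖ ≤ K * ‖x - x₀‖ := by
        simpa [dist_eq_norm] using hf.dist_le_mul x x₀
      have h2 : ‖x - x₀‖ ≤ a + 1 := by
        simpa [dist_eq_norm] using (Metric.mem_closedBall.mp hx)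
      push_cast
      calc ‖f x‖ = ‖(f x - f x₀) + f x₀‖ := by rw [sub_add_cancel]
        _ ≤ ‖f x - f x₀‖ + ‖f x₀‖ := norm_add_le _ _
        _ ≤ K * (a+1) + a := by nlinarith
        _ = a + K*(a+1) := by ring
    · exact hf.lipschitzOnWith
    · have hm : max (t₀ + ε - t₀) (t₀ - t₀) = ε := by
        have h1 : t₀ + ε - t₀ = ε := by ring
        rw [h1, sub_self, max_eq_left hε.le]
      simp only [hm]
      have hKε : ((K:ℝ)+1) * ε = 1 := by
        rw [hεdef]
        field_simp
      push_cast
      nlinarith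
  obtain ⟨g, hg0, hgd⟩ := hpl.exists_eq_forall_mem_Icc_hasDerivWithinAt₀
  exact ⟨g, hg0, hgd⟩

lemma global_flow {H : Type*} [NormedAddCommGroup H] [NormedSpace ℝ H] [CompleteSpace H]
    (f : H → H) (K : NNReal) (hf : LipschitzWith K f) (x : H) :
    ∃ u : ℝ → H, u 0 = x ∧ ∀ t : ℝ, 0 ≤ t → HasDerivAt u (f (u t)) t := by
  classical
  set ε : ℝ := ((K:ℝ)+1)⁻¹ with hεdef
  have hε : 0 < ε := by positivity
  choose sol hsol0 hsolD using fun (t₀ : ℝ) (x₀ : H) => aux_local f K hf t₀ x₀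
  set p : ℕ → H := fun n => Nat.rec x (fun m pm => sol ((m:ℝ) * ε) pm ((m:ℝ) * ε + ε)) n
    with hpdef
  set G : ℕ → ℝ → H := fun n => sol ((n:ℝ) * ε) (p n) with hGdef
  have hp0 : p 0 = x := rfl
  have hpS : ∀ n : ℕ, p (n+1) = G n ((n:ℝ)*ε + ε) := fun n => rfl
  have hGn0 : ∀ n : ℕ, G n ((n:ℝ)*ε) = p n := fun n => hsol0 _ _
  set u : ℝ → H := fun t => if t < 0 then x + t • f x else G ⌊t/ε⌋₊ t with hudef
  have hu0 : u 0 = x := by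
    have h1 : ⌊(0:ℝ)/ε⌋₊ = 0 := by simp
    have h2 : ¬ (0:ℝ) < 0 := lt_irrefl 0
    have h3 : ((0:ℕ):ℝ) * ε = 0 := by simp
    calc u 0 = G 0 0 := by rw [hudef]; simp [h1]
      _ = p 0 := by rw [← h3, hGn0]
      _ = x := hp0
  have key_eq : ∀ n : ℕ, ∀ t ∈ Icc ((n:ℝ)*ε) ((n:ℝ)*ε + ε), u t = G n t := by
    intro n t ht
    have hn0 : (0:ℝ) ≤ (n:ℝ)*ε := by positivity
    have ht0 : (0:ℝ) ≤ t := le_trans hn0 ht.1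
    have hndiv : (n:ℝ) ≤ t/ε := (le_div_iff₀ hε).mpr (by linarith [ht.1])
    rcases eq_or_lt_of_le ht.2 with heq | hlt
    · -- t = n*ε + ε : two pieces agree
      have hteq : t = ((n+1:ℕ):ℝ) * ε := by push_cast; linarith [heq.symm]
      have hdiv : t/ε = ((n+1:ℕ):ℝ) := by rw [hteq]; field_simp
      have hfl : ⌊t/ε⌋₊ = n+1 := by rw [hdiv, Nat.floor_natCast]
      have : u t = G (n+1) t := by rw [hudef]; simp only [not_lt.mpr ht0, if_false, hfl]
      rw [this, hteq, hGn0 (n+1), hpS n]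
      congr 1
      push_cast
      linarith [heq.symm]
    · have hfl : ⌊t/ε⌋₊ = n := by
        rw [Nat.floor_eq_iff (by positivity)]
        constructor
        · exact hndiv
        · rw [div_lt_iff₀ hε]; push_cast; linarith
      rw [hudef]; simp only [not_lt.mpr ht0, if_false, hfl]
  have key : ∀ n : ℕ, ∀ t ∈ Icc ((n:ℝ)*ε) ((n:ℝ)*ε + ε),
      HasDerivWithinAt u (f (u t)) (Icc ((n:ℝ)*ε) ((n:ℝ)*ε + ε)) t := by
    intro n t ht
    have h := hsolD ((n:ℝ)*ε) (p n) t ht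
    have h1 : u t = G n t := key_eq n t ht
    rw [h1]
    exact h.congr (fun s hs => key_eq n s hs) h1
  refine ⟨u, hu0, ?_⟩
  intro t ht
  rcases eq_or_lt_of_le ht with h0 | htpos
  · -- t = 0
    subst h0
    have haff : HasDerivAt (fun s : ℝ => x + s • f x) (f x) 0 := by
      simpa using ((hasDerivAt_id (0:ℝ)).smul_const (f x)).const_add x
    have hleft : HasDerivWithinAt u (f (u 0)) (Iic 0) 0 := by
      rw [hu0]
      refine (haff.hasDerivWithinAt).congr (fun s hs => ?_) (by simp [hu0])
      rcases lt_or_eq_of_le (mem_Iic.mp hs) with h | h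
      · rw [hudef]; simp [h]
      · subst h; simp [hu0]
    have hright : HasDerivWithinAt u (f (u 0)) (Icc 0 ε) 0 := by
      have := key 0 0 ⟨by simp, by simp [hε.le]⟩
      simpa using this
    have hunion := hleft.union hright
    have hmem : Iic (0:ℝ) ∪ Icc 0 ε ∈ nhds (0:ℝ) := by
      refine Filter.mem_of_superset (Ioo_mem_nhds (show (-1:ℝ) < 0 by norm_num) hε) ?_
      intro s hs
      rcases le_or_gt s 0 with h | h
      · exact Or.inl h
      · exact Or.inr ⟨h.le, hs.2.le⟩
    exact hunion.hasDerivAt hmem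
  · obtain ⟨n, hn1, hn2⟩ : ∃ n : ℕ, (n:ℝ)*ε < t ∧ t ≤ (n:ℝ)*ε + ε := by
      set m := ⌈t/ε⌉₊ with hm
      have hm1 : 1 ≤ m := Nat.one_le_ceil_iff.mpr (by positivity)
      refine ⟨m - 1, ?_, ?_⟩
      · have : ((m-1:ℕ):ℝ) < t/ε := Nat.lt_ceil.mp (by omega)
        calc ((m-1:ℕ):ℝ) * ε < (t/ε) * ε := by nlinarith
          _ = t := by field_simp
      · have h2 : t/ε ≤ (m:ℝ) := Nat.le_ceil _
        have h3 : ((m-1:ℕ):ℝ) = (m:ℝ) - 1 := by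
          rw [Nat.cast_sub hm1]; norm_num
        have h4 : t ≤ (m:ℝ) * ε := by
          calc t = (t/ε) * ε := by field_simp
            _ ≤ (m:ℝ) * ε := by nlinarith
        rw [h3]; nlinarith
    rcases eq_or_lt_of_le hn2 with heq | hlt
    · -- t = n*ε + ε : junction, union of pieces n and n+1
      have hA := key n t ⟨hn1.le, hn2⟩
      have hB : HasDerivWithinAt u (f (u t)) (Icc ((n:ℝ)*ε + ε) ((n:ℝ)*ε + ε + ε)) t := by
        have hcast : ((n+1:ℕ):ℝ)*ε = (n:ℝ)*ε + ε := by push_cast; ring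
        have := key (n+1) t ⟨by rw [hcast]; exact heq.symm.le, by rw [hcast]; linarith⟩
        rwa [hcast] at this
      have hunion := hA.union hB
      rw [Icc_union_Icc_eq_Icc (by linarith) (by linarith)] at hunion
      exact hunion.hasDerivAt (Icc_mem_nhds hn1 (by linarith))
    · exact (key n t ⟨hn1.le, hn2⟩).hasDerivAt (Icc_mem_nhds hn1 hlt)


lemma aux_mono (g g' : ℝ → ℝ) (a b : ℝ) (hab : a ≤ b)
    (hg : ∀ t ∈ Icc a b, HasDerivAt g (g' t) t)
    (h' : ∀ t ∈ Ioo a b, g' t ≤ 0) : g b ≤ g a := by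
  have hcont : ContinuousOn g (Icc a b) :=
    fun t ht => ((hg t ht).continuousAt).continuousWithinAt
  have hdiff : DifferentiableOn ℝ g (interior (Icc a b)) := by
    rw [interior_Icc]
    exact fun t ht => ((hg t (Ioo_subset_Icc_self ht)).differentiableAt).differentiableWithinAt
  have hanti := antitoneOn_of_deriv_nonpos (convex_Icc a b) hcont hdiff (fun t ht => by
    rw [interior_Icc] at ht
    rw [(hg t (Ioo_subset_Icc_self ht)).deriv]
    exact h' t ht)
  exact hanti (left_mem_Icc.mpr hab) (right_mem_Icc.mpr hab) hab

/-- Abstract Hilbert-space form of Lemma 2.3: if `I` is a Fréchet-differentiable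
functional with Lipschitz gradient satisfying the Palais–Smale condition, and
`D` is a nonempty closed set invariant under the negative gradient flow on
which `I` is bounded below, then the infimum of `I` over `D` is attained at a
critical point of `I` lying in `D`. -/
theorem stmt_18 {H : Type*} [NormedAddCommGroup H] [InnerProductSpace ℝ H]
    [CompleteSpace H]
    (I : H → ℝ) (I' : H → H) (hgrad : ∀ v : H, HasGradientAt I (I' v) v)
    (hI'lip : ∃ K : NNReal, LipschitzWith K I')
    (hPS : ∀ v : ℕ → H, (∃ M : ℝ, ∀ n, |I (v n)| ≤ M) →
      Filter.Tendsto (fun n => I' (v n)) Filter.atTop (nhds 0) →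
      ∃ (φ : ℕ → ℕ) (w : H), StrictMono φ ∧
        Filter.Tendsto (fun n => v (φ n)) Filter.atTop (nhds w))
    (D : Set H) (hDne : D.Nonempty) (hDclosed : IsClosed D)
    (hDinv : ∀ u : ℝ → H,
      (∀ t : ℝ, 0 ≤ t → HasDerivAt u (-I' (u t)) t) → u 0 ∈ D →
      ∀ t : ℝ, 0 ≤ t → u t ∈ D)
    (c : ℝ) (hc : IsGLB (I '' D) c) :
    ∃ u₀ ∈ D, I' u₀ = 0 ∧ I u₀ = c := by
  obtain ⟨K, hK⟩ := hI'lip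
  have hflip : LipschitzWith K (fun v => -I' v) := hK.neg
  -- minimizing sequence
  have hvex : ∀ n : ℕ, ∃ v ∈ D, c ≤ I v ∧ I v < c + 1/(n+1) := by
    intro n
    have hlt : c < c + 1/(n+1) := by
      have : (0:ℝ) < 1/(n+1) := by positivity
      linarith
    obtain ⟨y, hy, h1, h2⟩ := hc.exists_between hlt
    obtain ⟨v, hvD, rfl⟩ := hy
    exact ⟨v, hvD, h1, h2⟩
  choose v hvD hvc hvlt using hvex
  -- flows
  have hflow : ∀ n : ℕ, ∃ u : ℝ → H, u 0 = v n ∧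
      ∀ t : ℝ, 0 ≤ t → HasDerivAt u (-I' (u t)) t := fun n =>
    global_flow (fun w => -I' w) K hflip (v n)
  choose uu huu0 huud using hflow
  have huuD : ∀ n t, 0 ≤ t → uu n t ∈ D := fun n =>
    hDinv (uu n) (huud n) (by rw [huu0]; exact hvD n)
  -- energy derivative
  have hE : ∀ n : ℕ, ∀ t : ℝ, 0 ≤ t →
      HasDerivAt (fun s => I (uu n s)) (-‖I' (uu n t)‖^2) t := by
    intro n t ht
    have h1 := ((hgrad (uu n t)).hasFDerivAt).comp_hasDerivAt t (huud n t ht)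
    have h2 : ((InnerProductSpace.toDual ℝ H) (I' (uu n t))) (-I' (uu n t)) = -‖I' (uu n t)‖^2 := by
      rw [InnerProductSpace.toDual_apply_apply, inner_neg_right, real_inner_self_eq_norm_sq]
    rw [← h2]
    exact h1
  -- find times with small gradient
  have hex : ∀ n : ℕ, ∃ t ∈ Icc (0:ℝ) 1,
      ‖I' (uu n t)‖^2 ≤ (I (v n) - c) + 1/(n+1) := by
    intro n
    by_contra hcon
    push_neg at hcon
    set β : ℝ := (I (v n) - c) + 1/(n+1) with hβ
    have hg : ∀ t ∈ Icc (0:ℝ) 1,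
        HasDerivAt (fun s => I (uu n s) + β * s) (-‖I' (uu n t)‖^2 + β) t := by
      intro t ht
      have := (hE n t ht.1).add ((hasDerivAt_id t).const_mul β)
      simp only [mul_one] at this
      exact this
    have hmono := aux_mono (fun s => I (uu n s) + β * s)
      (fun t => -‖I' (uu n t)‖^2 + β) 0 1 zero_le_one hg
      (fun t ht => by
        have h := hcon t ⟨ht.1.le, ht.2.le⟩
        show -‖I' (uu n t)‖^2 + β ≤ 0
        linarith)
    simp only [mul_one, mul_zero, add_zero] at hmono
    have h0 : uu n 0 = v n := huu0 n
    have h1 : c ≤ I (uu n 1) := hc.1 ⟨uu n 1, huuD n 1 zero_le_one, rfl⟩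
    have h2 : (0:ℝ) < 1/(n+1) := by positivity
    rw [h0] at hmono
    rw [hβ] at hmono
    linarith
  choose tt htt httle using hex
  set w : ℕ → H := fun n => uu n (tt n) with hwdef
  have hwD : ∀ n, w n ∈ D := fun n => huuD n (tt n) (htt n).1
  have hwlow : ∀ n, c ≤ I (w n) := fun n => hc.1 ⟨w n, hwD n, rfl⟩
  have hwhigh : ∀ n, I (w n) ≤ I (v n) := by
    intro n
    have hmono := aux_mono (fun s => I (uu n s)) (fun t => -‖I' (uu n t)‖^2)
      0 (tt n) (htt n).1 (fun t ht => hE n t ht.1)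
      (fun t _ => neg_nonpos.mpr (by positivity))
    simp only [huu0 n] at hmono
    exact hmono
  have hn1 : ∀ n : ℕ, (0:ℝ) < (n:ℝ)+1 := fun n => by positivity
  have hIwb : ∀ n, I (w n) ≤ c + 1/(n+1) := fun n =>
    le_trans (hwhigh n) (hvlt n).le
  -- gradient norm bound
  have hnorm : ∀ n : ℕ, ‖I' (w n)‖ ≤ Real.sqrt (2/(n+1)) := by
    intro n
    have hb : ‖I' (w n)‖^2 ≤ 2/((n:ℝ)+1) := by
      have h1 := httle n
      have h2 := hvlt n
      have : (2:ℝ)/((n:ℝ)+1) = 1/((n:ℝ)+1) + 1/((n:ℝ)+1) := by ring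
      rw [this]
      calc ‖I' (w n)‖^2 ≤ (I (v n) - c) + 1/(n+1) := h1
        _ ≤ 1/((n:ℝ)+1) + 1/((n:ℝ)+1) := by linarith
    calc ‖I' (w n)‖ = Real.sqrt (‖I' (w n)‖^2) := (Real.sqrt_sq (norm_nonneg _)).symm
      _ ≤ Real.sqrt (2/(n+1)) := Real.sqrt_le_sqrt hb
  have h2n : Tendsto (fun n : ℕ => 2/((n:ℝ)+1)) atTop (nhds 0) := by
    have := tendsto_one_div_add_atTop_nhds_zero_nat.const_mul (2:ℝ)
    simpa [mul_one_div, div_eq_mul_inv] using this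
  have hsq : Tendsto (fun n : ℕ => Real.sqrt (2/((n:ℝ)+1))) atTop (nhds 0) := by
    have h := (Real.continuous_sqrt.tendsto 0).comp h2n
    rw [Real.sqrt_zero] at h
    exact h
  have hI'tend : Tendsto (fun n => I' (w n)) atTop (nhds 0) := by
    rw [tendsto_zero_iff_norm_tendsto_zero]
    exact squeeze_zero (fun n => norm_nonneg _) hnorm hsq
  -- bounded
  have hbd : ∃ M : ℝ, ∀ n, |I (w n)| ≤ M := by
    refine ⟨|c| + 1, fun n => ?_⟩
    have h1 := hwlow n
    have h2 := hIwb n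
    have h3 : (1:ℝ)/((n:ℝ)+1) ≤ 1 := by
      rw [div_le_one (hn1 n)]
      linarith [Nat.cast_nonneg (α := ℝ) n]
    rw [abs_le]
    constructor
    · linarith [neg_abs_le c]
    · linarith [le_abs_self c]
  obtain ⟨φ, u₀, hφ, hconv⟩ := hPS w hbd hI'tend
  have hu₀D : u₀ ∈ D := hDclosed.mem_of_tendsto hconv
    (Filter.Eventually.of_forall fun n => hwD _)
  have hI'0 : I' u₀ = 0 := by
    have h1 : Tendsto (fun n => I' (w (φ n))) atTop (nhds (I' u₀)) :=
      ((hK.continuous).tendsto u₀).comp hconv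
    have h2 : Tendsto (fun n => I' (w (φ n))) atTop (nhds 0) :=
      hI'tend.comp hφ.tendsto_atTop
    exact tendsto_nhds_unique h1 h2
  have hIc : I u₀ = c := by
    have hIw : Tendsto (fun n => I (w n)) atTop (nhds c) := by
      have hup : Tendsto (fun n : ℕ => c + 1/((n:ℝ)+1)) atTop (nhds c) := by
        have := tendsto_one_div_add_atTop_nhds_zero_nat.const_add c
        simpa using this
      exact tendsto_of_tendsto_of_tendsto_of_le_of_le tendsto_const_nhds hup hwlow hIwb
    have h1 : Tendsto (fun n => I (w (φ n))) atTop (nhds (I u₀)) :=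
      (((hgrad u₀).hasFDerivAt.continuousAt).tendsto).comp hconv
    have h2 := hIw.comp hφ.tendsto_atTop
    exact tendsto_nhds_unique h1 h2
  exact ⟨u₀, hu₀D, hI'0, hIc⟩
end
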